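/- arXiv:1710.10924 — 8 statements merged into one kernel-verified Lean document; each statement's English description precedes it below -/
import Mathlib

section
/- Let p and q be positive real numbers such that p/q is irrational. Then there exists no strictly isomorphic rectangle partition pair for (p,q) of any finite size k. (Equivalently: the strict rectangle transformation problem SRTP(p,q) has no solution of finite size.) -/
open scoped Classical

/-- An axis-parallel rectangle in the plane, given by its coordinates. -/
structure Rect where
  x1 : ℝ
  x2 : ℝ
  y1 : ℝ
  y2 : ℝ

namespace Rect

/-- The horizontal side length. -/
def width (r : Rect) : ℝ := r.x2 - r.x1

/-- The vertical side length. -/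
def height (r : Rect) : ℝ := r.y2 - r.y1

/-- The closed rectangle as a set of points. -/
def carrier (r : Rect) : Set (ℝ × ℝ) := Set.Icc r.x1 r.x2 ×ˢ Set.Icc r.y1 r.y2

/-- The interior of the rectangle. -/
def inner (r : Rect) : Set (ℝ × ℝ) := Set.Ioo r.x1 r.x2 ×ˢ Set.Ioo r.y1 r.y2

/-- The rectangle is nondegenerate. -/
def Nondeg (r : Rect) : Prop := r.x1 < r.x2 ∧ r.y1 < r.y2

end Rect

/-- `P` is a rectangle partition of `[0, W] × [0, H]`: finitely many nondegenerate
rectangles with pairwise disjoint interiors whose union is `[0, W] × [0, H]`. -/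
def IsRectPartition {k : ℕ} (W H : ℝ) (P : Fin k → Rect) : Prop :=
  (∀ i, (P i).Nondeg) ∧
  (∀ i j : Fin k, i ≠ j → (P i).inner ∩ (P j).inner = ∅) ∧
  (⋃ i, (P i).carrier) = Set.Icc (0 : ℝ) W ×ˢ Set.Icc (0 : ℝ) H

/-- `P1`, `P2`, `σ` form a strictly isomorphic rectangle partition pair between the
rectangles `a × b` and `c × d`: matched modules have equal width and equal height. -/
def IsStrictIsoPair (a b c d : ℝ) {k : ℕ} (P1 P2 : Fin k → Rect)
    (σ : Equiv.Perm (Fin k)) : Prop :=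
  IsRectPartition a b P1 ∧ IsRectPartition c d P2 ∧
  ∀ i, (P1 i).width = (P2 (σ i)).width ∧ (P1 i).height = (P2 (σ i)).height

/-- There is a strictly isomorphic rectangle partition pair between `a × b` and `c × d`
of size `k`. -/
def StrictPairGen (a b c d : ℝ) (k : ℕ) : Prop :=
  ∃ (P1 P2 : Fin k → Rect) (σ : Equiv.Perm (Fin k)), IsStrictIsoPair a b c d P1 P2 σ

/-- A strictly isomorphic rectangle partition pair for `(p, q)` of size `k`:
partitions of `[0,p] × [0,q]` and `[0,q] × [0,p]` with a matching preserving
widths and heights. -/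
def StrictPair (p q : ℝ) (k : ℕ) : Prop := StrictPairGen p q q p k

/-- An isomorphic rectangle partition pair (rotation allowed) between `a × b` and
`c × d` of size `k`: matched modules have the same unordered pair of side lengths. -/
def IsoPairRot (a b c d : ℝ) (k : ℕ) : Prop :=
  ∃ (P1 P2 : Fin k → Rect) (σ : Equiv.Perm (Fin k)),
    IsRectPartition a b P1 ∧ IsRectPartition c d P2 ∧
    ∀ i, ((P1 i).width = (P2 (σ i)).width ∧ (P1 i).height = (P2 (σ i)).height) ∨
         ((P1 i).width = (P2 (σ i)).height ∧ (P1 i).height = (P2 (σ i)).width)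

/-- A slat rectangle partition: if horizontal sides of two modules lie on the same
horizontal line and overlap in more than one point, they are identical segments. -/
def IsSlat {k : ℕ} (P : Fin k → Rect) : Prop :=
  ∀ i j : Fin k, ∀ yi ∈ ({(P i).y1, (P i).y2} : Set ℝ),
    ∀ yj ∈ ({(P j).y1, (P j).y2} : Set ℝ), yi = yj →
      max (P i).x1 (P j).x1 < min (P i).x2 (P j).x2 →
      (P i).x1 = (P j).x1 ∧ (P i).x2 = (P j).x2

/-!
For additive maps `f g : ℝ → ℝ`, the quantity `∑ f(width) * g(height)` over the modules of a
rectangle partition of `[0,W] × [0,H]` equals `f W * g H` (a Dehn-type invariant): choose step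
functions `u`, `v` whose integrals between consecutive partition coordinates are the increments
of `f` and `g`, and integrate `u x * v y` over the rectangle module by module. Matched modules of a
strictly isomorphic pair contribute equally, so `f p * g q = f q * g p`. If `p / q` is irrational,
`p` and `q` are `ℚ`-linearly independent, so there is a `ℚ`-linear `f` with `f q = 0 ≠ f p`;
taking `g = id` gives `f p * q = 0`, a contradiction.
-/

open MeasureTheory Set

lemma exists_integrable_intervalIntegral_eq_sub (f : ℝ → ℝ) (S : Finset ℝ) :
    ∃ u : ℝ → ℝ, Integrable u ∧ ∀ a ∈ S, ∀ b ∈ S, ∫ t in a..b, u t = f b - f a := by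
  induction S using Finset.induction_on_max with
  | empty => exact ⟨0, integrable_zero _ _ _, by simp⟩
  | insert a s ha ih =>
    obtain ⟨u, hu, hus⟩ := ih
    rcases s.eq_empty_or_nonempty with rfl | hs
    · exact ⟨0, integrable_zero _ _ _, by simp⟩
    set m := s.max' hs
    have hm : m ∈ s := s.max'_mem hs
    have hma : m < a := ha m hm
    set c := (f a - f m) / (a - m)
    set u' := (Iic m).indicator u + (Ioc m a).indicator fun _ ↦ c
    have hu' : Integrable u' :=
      (hu.indicator measurableSet_Iic).add
        ((integrableOn_const measure_Ioc_lt_top.ne).integrable_indicator measurableSet_Ioc)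
    have hold : ∀ x ∈ s, ∫ t in m..x, u' t = f x - f m := by
      intro x hx
      rw [← hus m hm x hx]
      refine intervalIntegral.integral_congr fun t ht ↦ ?_
      have htm : t ≤ m := ht.2.trans (max_le le_rfl (s.le_max' x hx))
      simp [u', htm, not_lt.2 htm]
    have hnew : ∫ t in m..a, u' t = f a - f m := by
      rw [intervalIntegral.integral_congr_ae (g := fun _ ↦ c) ?_]
      · rw [intervalIntegral.integral_const, smul_eq_mul,
          mul_div_cancel₀ _ (sub_ne_zero.2 hma.ne')]
      · refine Filter.Eventually.of_forall fun t ht ↦ ?_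
        rw [uIoc_of_le hma.le] at ht
        simp [u', ht, not_le.2 ht.1]
    have hbase : ∀ x ∈ insert a s, ∫ t in m..x, u' t = f x - f m := by
      simpa [hnew] using hold
    refine ⟨u', hu', fun x hx y hy ↦ ?_⟩
    rw [← intervalIntegral.integral_interval_sub_left hu'.intervalIntegrable
      hu'.intervalIntegrable, hbase x hx, hbase y hy]
    ring

lemma Irrational.exists_addMonoidHom_map_eq_zero_map_ne_zero {p q : ℝ}
    (h : Irrational (p / q)) : ∃ f : ℝ →+ ℝ, f q = 0 ∧ f p ≠ 0 := by
  have hq : q ≠ 0 := by rintro rfl; simp at h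
  have hp : p ∉ (ℚ ∙ q) := by
    rw [Submodule.mem_span_singleton]
    rintro ⟨r, rfl⟩
    exact h ⟨r, by rw [Rat.smul_def, mul_div_cancel_right₀ _ hq]⟩
  obtain ⟨φ, hφp, hφq⟩ := Submodule.exists_dual_map_eq_bot_of_notMem hp inferInstance
  have hφq' : φ q ∈ (ℚ ∙ q).map φ :=
    Submodule.mem_map_of_mem (Submodule.mem_span_singleton_self q)
  rw [hφq, Submodule.mem_bot] at hφq'
  exact ⟨(Rat.castHom ℝ).toAddMonoidHom.comp φ.toAddMonoidHom, by simp [hφq'],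
    by simpa using hφp⟩

namespace Rect

lemma carrier_ae_eq_inner (r : Rect) : r.carrier =ᵐ[volume] r.inner := by
  rw [Measure.volume_eq_prod]
  exact Measure.set_prod_ae_eq Ioo_ae_eq_Icc.symm Ioo_ae_eq_Icc.symm

lemma setIntegral_carrier_mul (r : Rect) (hx : r.x1 ≤ r.x2) (hy : r.y1 ≤ r.y2)
    (u v : ℝ → ℝ) :
    ∫ z in r.carrier, u z.1 * v z.2 = (∫ x in r.x1..r.x2, u x) * ∫ y in r.y1..r.y2, v y := by
  rw [carrier, Measure.volume_eq_prod, setIntegral_prod_mul, integral_Icc_eq_integral_Ioc,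
    integral_Icc_eq_integral_Ioc, intervalIntegral.integral_of_le hx,
    intervalIntegral.integral_of_le hy]

end Rect

namespace IsRectPartition

variable {k : ℕ} {W H : ℝ} {P : Fin k → Rect}

lemma sum_setIntegral_carrier (hP : IsRectPartition W H P) {F : ℝ × ℝ → ℝ}
    (hF : IntegrableOn F (Icc 0 W ×ˢ Icc 0 H)) :
    ∑ i, ∫ z in (P i).carrier, F z = ∫ z in Icc 0 W ×ˢ Icc 0 H, F z := by
  obtain ⟨-, hdisj, hcover⟩ := hP
  have haedisj : Pairwise (Function.onFun (AEDisjoint volume) fun i ↦ (P i).carrier) :=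
    fun i j hij ↦ (Set.disjoint_iff_inter_eq_empty.2 (hdisj i j hij)).aedisjoint.congr
      (P i).carrier_ae_eq_inner (P j).carrier_ae_eq_inner
  have hmeas (i : Fin k) : MeasurableSet (P i).carrier :=
    measurableSet_Icc.prod measurableSet_Icc
  rw [← hcover, integral_iUnion_ae (fun i ↦ (hmeas i).nullMeasurableSet) haedisj (hcover ▸ hF),
    tsum_fintype]

lemma sum_map_width_mul_map_height (hP : IsRectPartition W H P) (hW : 0 ≤ W) (hH : 0 ≤ H)
    (f g : ℝ →+ ℝ) : ∑ i, f (P i).width * g (P i).height = f W * g H := by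
  let S : Finset ℝ :=
    {0, W} ∪ Finset.univ.image (fun i ↦ (P i).x1) ∪ Finset.univ.image (fun i ↦ (P i).x2)
  let T : Finset ℝ :=
    {0, H} ∪ Finset.univ.image (fun i ↦ (P i).y1) ∪ Finset.univ.image (fun i ↦ (P i).y2)
  obtain ⟨u, hu, hS⟩ := exists_integrable_intervalIntegral_eq_sub f S
  obtain ⟨v, hv, hT⟩ := exists_integrable_intervalIntegral_eq_sub g T
  have huv : Integrable (fun z : ℝ × ℝ ↦ u z.1 * v z.2) := by
    rw [Measure.volume_eq_prod]
    exact hu.mul_prod hv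
  calc ∑ i, f (P i).width * g (P i).height
      = ∑ i, ∫ z in (P i).carrier, u z.1 * v z.2 := by
        refine Finset.sum_congr rfl fun i _ ↦ ?_
        rw [Rect.setIntegral_carrier_mul _ (hP.1 i).1.le (hP.1 i).2.le,
          hS _ (by simp [S]) _ (by simp [S]), hT _ (by simp [T]) _ (by simp [T]),
          Rect.width, Rect.height, map_sub, map_sub]
    _ = ∫ z in (⟨0, W, 0, H⟩ : Rect).carrier, u z.1 * v z.2 :=
        hP.sum_setIntegral_carrier huv.integrableOn
    _ = f W * g H := by
        rw [Rect.setIntegral_carrier_mul _ hW hH, hS 0 (by simp [S]) W (by simp [S]),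
          hT 0 (by simp [T]) H (by simp [T]), map_zero, map_zero, sub_zero, sub_zero]

end IsRectPartition

lemma StrictPairGen.map_mul_map_eq {a b c d : ℝ} {k : ℕ} (h : StrictPairGen a b c d k)
    (ha : 0 ≤ a) (hb : 0 ≤ b) (hc : 0 ≤ c) (hd : 0 ≤ d) (f g : ℝ →+ ℝ) :
    f a * g b = f c * g d := by
  obtain ⟨P1, P2, σ, h1, h2, hmatch⟩ := h
  rw [← h1.sum_map_width_mul_map_height ha hb, ← h2.sum_map_width_mul_map_height hc hd,
    ← Equiv.sum_comp σ fun j ↦ f (P2 j).width * g (P2 j).height]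
  exact Finset.sum_congr rfl fun i _ ↦ by rw [(hmatch i).1, (hmatch i).2]

/-- If `p/q` is irrational, `SRTP(p,q)` has no solution of any finite size. -/
theorem srtp_no_solution_of_irrational (p q : ℝ) (hp : 0 < p) (hq : 0 < q)
    (hirr : Irrational (p / q)) (k : ℕ) : ¬ StrictPair p q k := by
  intro hpair
  obtain ⟨f, hfq, hfp⟩ := hirr.exists_addMonoidHom_map_eq_zero_map_ne_zero
  have h := hpair.map_mul_map_eq hp.le hq.le hq.le hp.le f (AddMonoidHom.id ℝ)
  rw [hfq, zero_mul, AddMonoidHom.id_apply] at h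
  exact hfp ((mul_eq_zero.1 h).resolve_right hq.ne')
end

section
/- There exists a constant C > 0 such that for all positive integers p and q with p ≤ q, there exists a strictly isomorphic rectangle partition pair for (p,q) of size at most q/p + C·√p. -/
open scoped Classical

-- ==== auxiliary constructions ====

namespace SIRTP

open Set

def shiftY (q : Rect) (c : ℝ) : Rect := ⟨q.x1, q.x2, q.y1 + c, q.y2 + c⟩
def shiftX (q : Rect) (c : ℝ) : Rect := ⟨q.x1 + c, q.x2 + c, q.y1, q.y2⟩
def scaleR (l : ℝ) (q : Rect) : Rect := ⟨l * q.x1, l * q.x2, l * q.y1, l * q.y2⟩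

@[simp] lemma shiftY_width (q : Rect) (c : ℝ) : (shiftY q c).width = q.width := rfl
@[simp] lemma shiftY_height (q : Rect) (c : ℝ) : (shiftY q c).height = q.height := by
  simp [Rect.height, shiftY]
@[simp] lemma shiftX_width (q : Rect) (c : ℝ) : (shiftX q c).width = q.width := by
  simp [Rect.width, shiftX]
@[simp] lemma shiftX_height (q : Rect) (c : ℝ) : (shiftX q c).height = q.height := rfl

@[simp] lemma scaleR_width (l : ℝ) (q : Rect) : (scaleR l q).width = l * q.width := by
  simp only [Rect.width, scaleR]; ring

@[simp] lemma scaleR_height (l : ℝ) (q : Rect) : (scaleR l q).height = l * q.height := by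
  simp only [Rect.height, scaleR]; ring

lemma mem_carrier {q : Rect} {x y : ℝ} :
    (x, y) ∈ q.carrier ↔ (q.x1 ≤ x ∧ x ≤ q.x2) ∧ (q.y1 ≤ y ∧ y ≤ q.y2) := by
  simp only [Rect.carrier, Set.mem_prod, Set.mem_Icc]

lemma mem_inner {q : Rect} {x y : ℝ} :
    (x, y) ∈ q.inner ↔ (q.x1 < x ∧ x < q.x2) ∧ (q.y1 < y ∧ y < q.y2) := by
  simp only [Rect.inner, Set.mem_prod, Set.mem_Ioo]

lemma part_bounds {k : ℕ} {W H : ℝ} {P : Fin k → Rect} (h : IsRectPartition W H P) (i : Fin k) :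
    0 ≤ (P i).x1 ∧ (P i).x2 ≤ W ∧ 0 ≤ (P i).y1 ∧ (P i).y2 ≤ H := by
  have hne := h.1 i
  have hsub : (P i).carrier ⊆ Set.Icc 0 W ×ˢ Set.Icc 0 H := by
    rw [← h.2.2]; exact Set.subset_iUnion (fun j => (P j).carrier) i
  have h1 : ((P i).x1, (P i).y1) ∈ (P i).carrier :=
    mem_carrier.2 ⟨⟨le_refl _, hne.1.le⟩, le_refl _, hne.2.le⟩
  have h2 : ((P i).x2, (P i).y2) ∈ (P i).carrier :=
    mem_carrier.2 ⟨⟨hne.1.le, le_refl _⟩, hne.2.le, le_refl _⟩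
  have b1 := hsub h1
  have b2 := hsub h2
  simp only [Set.mem_prod, Set.mem_Icc] at b1 b2
  exact ⟨b1.1.1, b2.1.2, b1.2.1, b2.2.2⟩

lemma glue_vert {k₁ k₂ : ℕ} {a c d : ℝ} (hc : 0 ≤ c) (hd : 0 ≤ d)
    {P : Fin k₁ → Rect} {Q : Fin k₂ → Rect}
    (hP : IsRectPartition a c P) (hQ : IsRectPartition a d Q) :
    IsRectPartition a (c + d)
      (fun i => Sum.elim P (fun j => shiftY (Q j) c) (finSumFinEquiv.symm i)) := by
  have hPb := fun i => part_bounds hP i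
  have hQb := fun j => part_bounds hQ j
  refine ⟨?_, ?_, ?_⟩
  · intro i
    rcases hst : finSumFinEquiv.symm i with s | t
    · simpa [hst] using hP.1 s
    · have := hQ.1 t
      simp only [hst, Sum.elim_inr]
      exact ⟨this.1, by simpa [shiftY, Rect.Nondeg] using this.2⟩
  · intro i j hij
    have hij' : finSumFinEquiv.symm i ≠ finSumFinEquiv.symm j := fun h => hij (by
      simpa using congrArg finSumFinEquiv h)
    rcases hsi : finSumFinEquiv.symm i with s | t <;>
      rcases hsj : finSumFinEquiv.symm j with s' | t' <;>
        simp only [hsi, hsj, Sum.elim_inl, Sum.elim_inr]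
    · exact hP.2.1 s s' (by rintro rfl; exact hij' (hsi.trans hsj.symm))
    · apply Set.eq_empty_iff_forall_notMem.2
      rintro ⟨x, y⟩ ⟨h1, h2⟩
      rw [mem_inner] at h1 h2
      simp only [shiftY] at h2
      have := (hPb s).2.2.2
      have := (hQb t').2.2.1
      linarith [h1.2.2, h2.2.1]
    · apply Set.eq_empty_iff_forall_notMem.2
      rintro ⟨x, y⟩ ⟨h1, h2⟩
      rw [mem_inner] at h1 h2
      simp only [shiftY] at h1
      have := (hPb s').2.2.2
      have := (hQb t).2.2.1
      linarith [h2.2.2, h1.2.1]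
    · have ht : t ≠ t' := by rintro rfl; exact hij' (hsi.trans hsj.symm)
      have h0 := hQ.2.1 t t' ht
      apply Set.eq_empty_iff_forall_notMem.2
      rintro ⟨x, y⟩ ⟨h1, h2⟩
      rw [mem_inner] at h1 h2
      simp only [shiftY] at h1 h2
      have : (x, y - c) ∈ (Q t).inner ∩ (Q t').inner := by
        rw [Set.mem_inter_iff, mem_inner, mem_inner]
        constructor
        · exact ⟨h1.1, by constructor <;> linarith [h1.2.1, h1.2.2]⟩
        · exact ⟨h2.1, by constructor <;> linarith [h2.2.1, h2.2.2]⟩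
      rw [h0] at this
      exact this
  · have key : (⋃ i, (Sum.elim P (fun j => shiftY (Q j) c) (finSumFinEquiv.symm i)).carrier)
        = ⋃ s : Fin k₁ ⊕ Fin k₂, (Sum.elim P (fun j => shiftY (Q j) c) s).carrier :=
      finSumFinEquiv.symm.surjective.iUnion_comp
        (g := fun s => (Sum.elim P (fun j => shiftY (Q j) c) s).carrier)
    rw [key, Set.iUnion_sum]
    simp only [Sum.elim_inl, Sum.elim_inr]
    have hQu : (⋃ j, (shiftY (Q j) c).carrier) = Set.Icc (0:ℝ) a ×ˢ Set.Icc c (c + d) := by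
      ext ⟨x, y⟩
      have horig : ((x, y - c) ∈ ⋃ j, (Q j).carrier) ↔
          (x, y - c) ∈ Set.Icc (0:ℝ) a ×ˢ Set.Icc (0:ℝ) d := by rw [hQ.2.2]
      simp only [Set.mem_iUnion, mem_carrier, Set.mem_prod, Set.mem_Icc] at horig ⊢
      constructor
      · rintro ⟨j, hj⟩
        simp only [shiftY] at hj
        have : (Q j).x1 ≤ x ∧ x ≤ (Q j).x2 ∧ (Q j).y1 ≤ y - c ∧ y - c ≤ (Q j).y2 := by
          refine ⟨hj.1.1, hj.1.2, by linarith [hj.2.1], by linarith [hj.2.2]⟩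
        have := horig.1 ⟨j, ⟨⟨this.1, this.2.1⟩, this.2.2.1, this.2.2.2⟩⟩
        constructor
        · exact this.1
        · constructor <;> linarith [this.2.1, this.2.2]
      · rintro ⟨hx, hy⟩
        obtain ⟨j, hj⟩ := horig.2 ⟨hx, by constructor <;> linarith [hy.1, hy.2]⟩
        exact ⟨j, by
          simp only [shiftY]
          exact ⟨hj.1, by constructor <;> linarith [hj.2.1, hj.2.2]⟩⟩
    rw [hP.2.2, hQu, ← Set.prod_union,
      Set.Icc_union_Icc_eq_Icc hc (by linarith : c ≤ c + d)]


lemma glue_horiz {k₁ k₂ : ℕ} {a c d : ℝ} (hc : 0 ≤ c) (hd : 0 ≤ d)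
    {P : Fin k₁ → Rect} {Q : Fin k₂ → Rect}
    (hP : IsRectPartition c a P) (hQ : IsRectPartition d a Q) :
    IsRectPartition (c + d) a
      (fun i => Sum.elim P (fun j => shiftX (Q j) c) (finSumFinEquiv.symm i)) := by
  have hPb := fun i => part_bounds hP i
  have hQb := fun j => part_bounds hQ j
  refine ⟨?_, ?_, ?_⟩
  · intro i
    rcases hst : finSumFinEquiv.symm i with s | t
    · simpa [hst] using hP.1 s
    · have := hQ.1 t
      simp only [hst, Sum.elim_inr]
      exact ⟨by simpa [shiftX, Rect.Nondeg] using this.1, this.2⟩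
  · intro i j hij
    have hij' : finSumFinEquiv.symm i ≠ finSumFinEquiv.symm j := fun h => hij (by
      simpa using congrArg finSumFinEquiv h)
    rcases hsi : finSumFinEquiv.symm i with s | t <;>
      rcases hsj : finSumFinEquiv.symm j with s' | t' <;>
        simp only [hsi, hsj, Sum.elim_inl, Sum.elim_inr]
    · exact hP.2.1 s s' (by rintro rfl; exact hij' (hsi.trans hsj.symm))
    · apply Set.eq_empty_iff_forall_notMem.2
      rintro ⟨x, y⟩ ⟨h1, h2⟩
      rw [mem_inner] at h1 h2
      simp only [shiftX] at h2
      have := (hPb s).2.1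
      have := (hQb t').1
      linarith [h1.1.2, h2.1.1]
    · apply Set.eq_empty_iff_forall_notMem.2
      rintro ⟨x, y⟩ ⟨h1, h2⟩
      rw [mem_inner] at h1 h2
      simp only [shiftX] at h1
      have := (hPb s').2.1
      have := (hQb t).1
      linarith [h2.1.2, h1.1.1]
    · have ht : t ≠ t' := by rintro rfl; exact hij' (hsi.trans hsj.symm)
      have h0 := hQ.2.1 t t' ht
      apply Set.eq_empty_iff_forall_notMem.2
      rintro ⟨x, y⟩ ⟨h1, h2⟩
      rw [mem_inner] at h1 h2
      simp only [shiftX] at h1 h2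
      have : (x - c, y) ∈ (Q t).inner ∩ (Q t').inner := by
        rw [Set.mem_inter_iff, mem_inner, mem_inner]
        constructor
        · exact ⟨by constructor <;> linarith [h1.1.1, h1.1.2], h1.2⟩
        · exact ⟨by constructor <;> linarith [h2.1.1, h2.1.2], h2.2⟩
      rw [h0] at this
      exact this
  · have key : (⋃ i, (Sum.elim P (fun j => shiftX (Q j) c) (finSumFinEquiv.symm i)).carrier)
        = ⋃ s : Fin k₁ ⊕ Fin k₂, (Sum.elim P (fun j => shiftX (Q j) c) s).carrier :=
      finSumFinEquiv.symm.surjective.iUnion_comp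
        (g := fun s => (Sum.elim P (fun j => shiftX (Q j) c) s).carrier)
    rw [key, Set.iUnion_sum]
    simp only [Sum.elim_inl, Sum.elim_inr]
    have hQu : (⋃ j, (shiftX (Q j) c).carrier) = Set.Icc c (c + d) ×ˢ Set.Icc (0:ℝ) a := by
      ext ⟨x, y⟩
      have horig : ((x - c, y) ∈ ⋃ j, (Q j).carrier) ↔
          (x - c, y) ∈ Set.Icc (0:ℝ) d ×ˢ Set.Icc (0:ℝ) a := by rw [hQ.2.2]
      simp only [Set.mem_iUnion, mem_carrier, Set.mem_prod, Set.mem_Icc] at horig ⊢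
      constructor
      · rintro ⟨j, hj⟩
        simp only [shiftX] at hj
        have : (Q j).x1 ≤ x - c ∧ x - c ≤ (Q j).x2 ∧ (Q j).y1 ≤ y ∧ y ≤ (Q j).y2 := by
          refine ⟨by linarith [hj.1.1], by linarith [hj.1.2], hj.2.1, hj.2.2⟩
        have := horig.1 ⟨j, ⟨⟨this.1, this.2.1⟩, this.2.2.1, this.2.2.2⟩⟩
        constructor
        · constructor <;> linarith [this.1.1, this.1.2]
        · exact this.2
      · rintro ⟨hx, hy⟩
        obtain ⟨j, hj⟩ := horig.2 ⟨⟨by linarith [hx.1], by linarith [hx.2]⟩, hy⟩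
        exact ⟨j, by
          simp only [shiftX]
          exact ⟨⟨by linarith [hj.1.1], by linarith [hj.1.2]⟩, hj.2⟩⟩
    rw [hP.2.2, hQu, ← Set.union_prod,
      Set.Icc_union_Icc_eq_Icc hc (by linarith : c ≤ c + d)]

lemma scale_part {k : ℕ} {W H l : ℝ} (hl : 0 < l) {P : Fin k → Rect}
    (h : IsRectPartition W H P) :
    IsRectPartition (l * W) (l * H) (fun i => scaleR l (P i)) := by
  refine ⟨?_, ?_, ?_⟩
  · intro i
    have := h.1 i
    exact ⟨by simpa [scaleR, Rect.Nondeg] using (mul_lt_mul_iff_right₀ hl).2 this.1,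
      by simpa [scaleR, Rect.Nondeg] using (mul_lt_mul_iff_right₀ hl).2 this.2⟩
  · intro i j hij
    have h0 := h.2.1 i j hij
    apply Set.eq_empty_iff_forall_notMem.2
    rintro ⟨x, y⟩ ⟨h1, h2⟩
    rw [mem_inner] at h1 h2
    simp only [scaleR] at h1 h2
    have hmem : (x / l, y / l) ∈ (P i).inner ∩ (P j).inner := by
      rw [Set.mem_inter_iff, mem_inner, mem_inner]
      constructor <;> constructor <;> constructor <;>
        first
          | exact (lt_div_iff₀ hl).2 (by linarith [h1.1.1, h1.1.2, h1.2.1, h1.2.2,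
              h2.1.1, h2.1.2, h2.2.1, h2.2.2])
          | exact (div_lt_iff₀ hl).2 (by linarith [h1.1.1, h1.1.2, h1.2.1, h1.2.2,
              h2.1.1, h2.1.2, h2.2.1, h2.2.2])
    rw [h0] at hmem
    exact hmem
  · ext ⟨x, y⟩
    have horig : ((x / l, y / l) ∈ ⋃ i, (P i).carrier) ↔
        (x / l, y / l) ∈ Set.Icc (0:ℝ) W ×ˢ Set.Icc (0:ℝ) H := by rw [h.2.2]
    simp only [Set.mem_iUnion, mem_carrier, Set.mem_prod, Set.mem_Icc] at horig ⊢
    constructor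
    · rintro ⟨i, hi⟩
      simp only [scaleR] at hi
      have := horig.1 ⟨i, ⟨⟨(le_div_iff₀ hl).2 (by linarith [hi.1.1]),
        (div_le_iff₀ hl).2 (by linarith [hi.1.2])⟩,
        (le_div_iff₀ hl).2 (by linarith [hi.2.1]),
        (div_le_iff₀ hl).2 (by linarith [hi.2.2])⟩⟩
      obtain ⟨⟨ha1, ha2⟩, hb1, hb2⟩ := this
      refine ⟨⟨?_, ?_⟩, ?_, ?_⟩
      · have := (le_div_iff₀ hl).1 ha1; linarith
      · have := (div_le_iff₀ hl).1 ha2; linarith [mul_comm W l]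
      · have := (le_div_iff₀ hl).1 hb1; linarith
      · have := (div_le_iff₀ hl).1 hb2; linarith [mul_comm H l]
    · rintro ⟨⟨ha1, ha2⟩, hb1, hb2⟩
      obtain ⟨i, hi⟩ := horig.2 ⟨⟨(le_div_iff₀ hl).2 (by linarith),
        (div_le_iff₀ hl).2 (by linarith [mul_comm l W])⟩,
        (le_div_iff₀ hl).2 (by linarith),
        (div_le_iff₀ hl).2 (by linarith [mul_comm l H])⟩
      refine ⟨i, ?_⟩
      simp only [scaleR]
      refine ⟨⟨?_, ?_⟩, ?_, ?_⟩
      · have := (le_div_iff₀ hl).1 hi.1.1; linarith [mul_comm (P i).x1 l]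
      · have := (div_le_iff₀ hl).1 hi.1.2; linarith [mul_comm (P i).x2 l]
      · have := (le_div_iff₀ hl).1 hi.2.1; linarith [mul_comm (P i).y1 l]
      · have := (div_le_iff₀ hl).1 hi.2.2; linarith [mul_comm (P i).y2 l]


abbrev SR (a b : ℝ) (k : ℕ) : Prop := StrictPairGen a b b a k

lemma isPart_single {W H : ℝ} (hW : 0 < W) (hH : 0 < H) :
    IsRectPartition W H (fun _ : Fin 1 => (⟨0, W, 0, H⟩ : Rect)) := by
  refine ⟨fun _ => ⟨hW, hH⟩, ?_, ?_⟩
  · intro i j hij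
    exact absurd (Subsingleton.elim i j) hij
  · rw [Set.iUnion_const]; rfl

lemma SR_square {a : ℝ} (ha : 0 < a) : SR a a 1 := by
  refine ⟨_, _, Equiv.refl _, isPart_single ha ha, isPart_single ha ha, fun i => ⟨rfl, rfl⟩⟩

lemma SR_sym {a b : ℝ} {k : ℕ} (h : SR a b k) : SR b a k := by
  obtain ⟨P1, P2, σ, h1, h2, h3⟩ := h
  refine ⟨P2, P1, σ.symm, h2, h1, fun i => ?_⟩
  have := h3 (σ.symm i)
  rw [Equiv.apply_symm_apply] at this
  exact ⟨this.1.symm, this.2.symm⟩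

lemma SR_scale {a b l : ℝ} {k : ℕ} (hl : 0 < l) (h : SR a b k) : SR (l * a) (l * b) k := by
  obtain ⟨P1, P2, σ, h1, h2, h3⟩ := h
  refine ⟨fun i => scaleR l (P1 i), fun i => scaleR l (P2 i), σ,
    scale_part hl h1, scale_part hl h2, fun i => ?_⟩
  obtain ⟨hw, hh⟩ := h3 i
  exact ⟨by rw [scaleR_width, scaleR_width, hw], by rw [scaleR_height, scaleR_height, hh]⟩


lemma SR_glue {a c d : ℝ} {k₁ k₂ : ℕ} (ha : 0 < a) (hc : 0 < c) (hd : 0 < d)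
    (h1 : SR a c k₁) (h2 : SR a d k₂) : SR a (c + d) (k₁ + k₂) := by
  obtain ⟨P1, P2, σ, hP1, hP2, hPm⟩ := h1
  obtain ⟨Q1, Q2, τ, hQ1, hQ2, hQm⟩ := h2
  refine ⟨fun i => Sum.elim P1 (fun j => shiftY (Q1 j) c) (finSumFinEquiv.symm i),
    fun i => Sum.elim P2 (fun j => shiftX (Q2 j) c) (finSumFinEquiv.symm i),
    (finSumFinEquiv.symm.trans ((Equiv.sumCongr σ τ).trans finSumFinEquiv)),
    glue_vert hc.le hd.le hP1 hQ1, glue_horiz hc.le hd.le hP2 hQ2, fun i => ?_⟩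
  simp only [Equiv.trans_apply, Equiv.symm_apply_apply, Equiv.sumCongr_apply]
  rcases hst : finSumFinEquiv.symm i with s | t
  · simp only [hst, Sum.elim_inl, Sum.map_inl, Equiv.coe_toEmbedding,
      Equiv.symm_apply_apply]
    exact hPm s
  · simp only [hst, Sum.elim_inr, Sum.map_inr, Equiv.coe_toEmbedding,
      Equiv.symm_apply_apply, shiftY_width, shiftY_height, shiftX_width, shiftX_height]
    exact hQm t

lemma SR_addsq {a b : ℝ} {k : ℕ} (ha : 0 < a) (hb : 0 < b) (h : SR a b k) :
    SR a (b + a) (k + 1) := SR_glue ha hb ha h (SR_square ha)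

lemma SR_nsq {a : ℝ} (ha : 0 < a) : ∀ n : ℕ, 0 < n → SR a ((n : ℝ) * a) n := by
  intro n
  induction n with
  | zero => intro h; exact absurd h (lt_irrefl 0)
  | succ m ih =>
    intro _
    rcases Nat.eq_zero_or_pos m with hm | hm
    · subst hm
      simpa using SR_square ha
    · have := SR_addsq ha (by positivity : (0:ℝ) < (m:ℝ) * a) (ih hm)
      have he : (m : ℝ) * a + a = ((m + 1 : ℕ) : ℝ) * a := by push_cast; ring
      rwa [he] at this

lemma SR_addnsq {a b : ℝ} {k : ℕ} (ha : 0 < a) (hb : 0 < b) (h : SR a b k) (n : ℕ) :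
    SR a (b + (n : ℝ) * a) (k + n) := by
  induction n with
  | zero => simpa using h
  | succ m ih =>
    have := SR_addsq ha (by positivity : (0:ℝ) < b + (m:ℝ) * a) ih
    have he : b + (m : ℝ) * a + a = b + ((m + 1 : ℕ) : ℝ) * a := by push_cast; ring
    rwa [he] at this

/-- halving step : from SR (2a) v get SR a (a/2 + v/2) with 2 extra pieces. -/
lemma SR_Dstep {a v : ℝ} {k : ℕ} (ha : 0 < a) (hv : 0 < v) (h : SR (2 * a) v k) :
    SR a (a / 2 + v / 2) (k + 2) := by
  have hhalf : SR a (a / 2) 2 := by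
    have h2 : SR (a / 2) ((2 : ℕ) * (a / 2)) 2 := SR_nsq (by positivity) 2 (by norm_num)
    have : ((2 : ℕ) : ℝ) * (a / 2) = a := by push_cast; ring
    rw [this] at h2
    exact SR_sym h2
  have hsc : SR ((1/2) * (2 * a)) ((1/2) * v) k := SR_scale (by norm_num) h
  have he1 : (1/2 : ℝ) * (2 * a) = a := by ring
  have he2 : (1/2 : ℝ) * v = v / 2 := by ring
  rw [he1, he2] at hsc
  have := SR_glue ha (by positivity : (0:ℝ) < a / 2) (by positivity : (0:ℝ) < v / 2) hhalf hsc
  rwa [show 2 + k = k + 2 by ring] at this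


open Real in
lemma three_logb_le_sqrt {x : ℝ} (hx : 1 ≤ x) : 3 * Real.logb 2 x ≤ 12 * Real.sqrt x := by
  have hx0 : (0:ℝ) < x := by linarith
  have hs0 : 0 < Real.sqrt x := Real.sqrt_pos.2 hx0
  have h1 : Real.log x = 2 * Real.log (Real.sqrt x) := by
    rw [Real.log_sqrt hx0.le]; ring
  have h2 : Real.log (Real.sqrt x) ≤ Real.sqrt x := by
    have := Real.log_le_sub_one_of_pos hs0
    linarith
  have h3 : Real.log x ≤ 2 * Real.sqrt x := by linarith
  have hlog2 : (0.6931471803 : ℝ) < Real.log 2 := Real.log_two_gt_d9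
  have hlogx : 0 ≤ Real.log x := Real.log_nonneg hx
  have hlb : Real.logb 2 x ≤ 4 * Real.sqrt x := by
    rw [Real.logb, div_le_iff₀ (by linarith : (0:ℝ) < Real.log 2)]
    nlinarith [hs0.le]
  linarith

lemma logb_four_mul {r : ℝ} (hr : 0 < r) :
    Real.logb 2 (4 * r) = 2 + Real.logb 2 r := by
  rw [Real.logb_mul (by norm_num) (ne_of_gt hr)]
  have : Real.logb 2 4 = 2 := by
    rw [show (4:ℝ) = 2 ^ (2:ℕ) by norm_num, Real.logb_pow]
    simp [Real.logb_self_eq_one]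
  rw [this]

set_option maxHeartbeats 1000000 in
lemma core : ∀ a : ℕ, ∀ r : ℕ, 0 < r → r < a →
    ∃ k : ℕ, SR (a : ℝ) ((a : ℝ) + (r : ℝ)) k ∧
      (k : ℝ) ≤ 10000 * Real.sqrt a - 6
        + 3 * Real.logb 2 ((a : ℝ) / ((min r (a - r) : ℕ) : ℝ)) := by
  intro a
  induction a using Nat.strong_induction_on with
  | _ a IH =>
  intro r hr hra
  have ha1 : 1 ≤ a := by omega
  have haR : (1:ℝ) ≤ (a:ℝ) := by exact_mod_cast ha1
  have ha0R : (0:ℝ) < (a:ℝ) := by linarith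
  have hr0R : (0:ℝ) < (r:ℝ) := by exact_mod_cast hr
  have hsqa : (1:ℝ) ≤ Real.sqrt a := by
    rw [show (1:ℝ) = Real.sqrt 1 by simp]
    exact Real.sqrt_le_sqrt haR
  -- the minimum is at least 1 and at most a
  have hm1 : 1 ≤ min r (a - r) := le_min hr (by omega)
  have hma : min r (a - r) ≤ a := le_trans (min_le_left _ _) hra.le
  have hmR : (1:ℝ) ≤ ((min r (a - r) : ℕ) : ℝ) := by exact_mod_cast hm1
  have hlogb_nonneg : 0 ≤ Real.logb 2 ((a : ℝ) / ((min r (a - r) : ℕ) : ℝ)) := by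
    apply Real.logb_nonneg (by norm_num)
    rw [le_div_iff₀ (by linarith : (0:ℝ) < ((min r (a - r) : ℕ) : ℝ))]
    have : ((min r (a - r) : ℕ) : ℝ) ≤ (a:ℝ) := by exact_mod_cast hma
    linarith
  by_cases hc1 : 10 * r < a
  · -- M-iii : small r
    have h2r : 2 * r ≤ a := by omega
    have hlt : a - 2 * r < a := by omega
    obtain ⟨k₀, hSR₀, hB₀⟩ := IH (a - 2 * r) hlt (4 * r) (by omega) (by omega)
    have hmin₀ : min (4 * r) ((a - 2 * r) - 4 * r) = 4 * r := by
      apply Nat.min_eq_left; omega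
    rw [hmin₀] at hB₀
    -- cast preliminaries
    have hcast1 : ((a - 2 * r : ℕ) : ℝ) = (a:ℝ) - 2 * r := by
      push_cast [Nat.cast_sub h2r]; ring
    have hcast2 : ((a - 2 * r : ℕ) : ℝ) + ((4 * r : ℕ) : ℝ) = (a:ℝ) + 2 * r := by
      rw [hcast1]; push_cast; ring
    rw [hcast2, hcast1] at hSR₀
    -- geometric chain
    have hpos1 : (0:ℝ) < (a:ℝ) - 2 * r := by
      have : (2 * r : ℕ) < a := by omega
      have := (Nat.cast_lt (α := ℝ)).2 this
      push_cast at this; linarith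
    have hpos2 : (0:ℝ) < (a:ℝ) + 2 * r := by linarith
    have s1 : SR ((a:ℝ) + 2 * r) ((a:ℝ) - 2 * r) k₀ := SR_sym hSR₀
    have s2 : SR ((a:ℝ) + 2 * r) (((a:ℝ) + 2 * r) + ((a:ℝ) - 2 * r)) (1 + k₀) :=
      SR_glue hpos2 hpos2 hpos1 (SR_square hpos2) s1
    have he1 : ((a:ℝ) + 2 * r) + ((a:ℝ) - 2 * r) = 2 * (a:ℝ) := by ring
    rw [he1] at s2
    have s3 : SR (2 * (a:ℝ)) ((a:ℝ) + 2 * r) (1 + k₀) := SR_sym s2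
    have s4 : SR (a:ℝ) ((a:ℝ)/2 + ((a:ℝ) + 2 * r)/2) (1 + k₀ + 2) := SR_Dstep ha0R hpos2 s3
    have he2 : (a:ℝ)/2 + ((a:ℝ) + 2 * r)/2 = (a:ℝ) + r := by ring
    rw [he2] at s4
    refine ⟨1 + k₀ + 2, s4, ?_⟩
    -- bound
    have hminT : min r (a - r) = r := by apply Nat.min_eq_left; omega
    rw [hminT]
    have hcast4 : ((4 * r : ℕ) : ℝ) = 4 * (r:ℝ) := by push_cast; ring
    rw [hcast1, hcast4] at hB₀
    have hr4R : (0:ℝ) < 4 * (r:ℝ) := by linarith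
    have hstep1 : Real.logb 2 (((a:ℝ) - 2*r) / (4 * (r:ℝ)))
        ≤ Real.logb 2 ((a:ℝ) / (4 * (r:ℝ))) := by
      apply Real.logb_le_logb_of_le (by norm_num)
      · exact div_pos hpos1 hr4R
      · exact (div_le_div_iff_of_pos_right hr4R).2 (by linarith)
    have hstep2 : Real.logb 2 ((a:ℝ) / (4 * (r:ℝ)))
        = Real.logb 2 ((a:ℝ) / (r:ℝ)) - 2 := by
      rw [Real.logb_div (ne_of_gt ha0R) (ne_of_gt hr4R),
        Real.logb_div (ne_of_gt ha0R) (ne_of_gt hr0R), logb_four_mul hr0R]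
      ring
    have hsqle : Real.sqrt ((a:ℝ) - 2*r) ≤ Real.sqrt a :=
      Real.sqrt_le_sqrt (by linarith)
    have : (k₀ : ℝ) ≤ 10000 * Real.sqrt a - 6 + 3 * Real.logb 2 ((a:ℝ)/(r:ℝ)) - 6 := by
      have := hstep1.trans_eq hstep2
      nlinarith [hsqle]
    push_cast
    linarith
  · by_cases hc2 : 10 * (a - r) < a
    · -- M-iv : r close to a
      obtain ⟨t, ht⟩ : ∃ t, a - r = t := ⟨a - r, rfl⟩
      have ht1 : 1 ≤ t := by omega
      have h2t : 2 * t ≤ a := by omega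
      obtain ⟨k₀, hSR₀, hB₀⟩ := IH (a - 2 * t) (by omega) (4 * t) (by omega) (by omega)
      have hmin₀ : min (4 * t) ((a - 2 * t) - 4 * t) = 4 * t := by
        apply Nat.min_eq_left; omega
      rw [hmin₀] at hB₀
      have hcast1 : ((a - 2 * t : ℕ) : ℝ) = (a:ℝ) - 2 * t := by
        push_cast [Nat.cast_sub h2t]; ring
      have hcast2 : ((a - 2 * t : ℕ) : ℝ) + ((4 * t : ℕ) : ℝ) = (a:ℝ) + 2 * t := by
        rw [hcast1]; push_cast; ring
      have hcast4 : ((4 * t : ℕ) : ℝ) = 4 * (t:ℝ) := by push_cast; ring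
      rw [hcast2, hcast1] at hSR₀
      rw [hcast1, hcast4] at hB₀
      have ht0R : (0:ℝ) < (t:ℝ) := by exact_mod_cast ht1
      have hpos1 : (0:ℝ) < (a:ℝ) - 2 * t := by
        have : ((2 * t : ℕ) : ℝ) < (a:ℝ) := by exact_mod_cast (by omega : 2 * t < a)
        push_cast at this; linarith
      have hpos2 : (0:ℝ) < (a:ℝ) + 2 * t := by linarith
      have hRS : (r:ℝ) = (a:ℝ) - (t:ℝ) := by
        have : ((r + t : ℕ) : ℝ) = (a:ℝ) := by exact_mod_cast (by omega : r + t = a)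
        push_cast at this; linarith
      have s2 : SR ((a:ℝ) - 2 * t) (((a:ℝ) + 2 * t) + ((a:ℝ) - 2 * t)) (k₀ + 1) :=
        SR_glue hpos1 hpos2 hpos1 hSR₀ (SR_square hpos1)
      rw [show ((a:ℝ) + 2 * t) + ((a:ℝ) - 2 * t) = 2 * (a:ℝ) by ring] at s2
      have s3 : SR (2 * (a:ℝ)) ((a:ℝ) - 2 * t) (k₀ + 1) := SR_sym s2
      have s4 : SR (2 * (a:ℝ)) ((2 * (a:ℝ)) + ((a:ℝ) - 2 * t)) (1 + (k₀ + 1)) :=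
        SR_glue (by linarith) (by linarith) hpos1 (SR_square (by linarith)) s3
      rw [show (2 * (a:ℝ)) + ((a:ℝ) - 2 * t) = 3 * (a:ℝ) - 2 * t by ring] at s4
      have s5 : SR (a:ℝ) ((a:ℝ)/2 + (3 * (a:ℝ) - 2 * t)/2) (1 + (k₀ + 1) + 2) :=
        SR_Dstep ha0R (by linarith) s4
      rw [show (a:ℝ)/2 + (3 * (a:ℝ) - 2 * t)/2 = 2 * (a:ℝ) - t by ring] at s5
      rw [show 2 * (a:ℝ) - (t:ℝ) = (a:ℝ) + (r:ℝ) by rw [hRS]; ring] at s5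
      refine ⟨1 + (k₀ + 1) + 2, s5, ?_⟩
      have hminT : min r (a - r) = t := by rw [ht]; apply Nat.min_eq_right; omega
      rw [hminT]
      have ht4R : (0:ℝ) < 4 * (t:ℝ) := by linarith
      have hstep1 : Real.logb 2 (((a:ℝ) - 2*t) / (4 * (t:ℝ)))
          ≤ Real.logb 2 ((a:ℝ) / (4 * (t:ℝ))) := by
        apply Real.logb_le_logb_of_le (by norm_num)
        · exact div_pos hpos1 ht4R
        · exact (div_le_div_iff_of_pos_right ht4R).2 (by linarith)
      have hstep2 : Real.logb 2 ((a:ℝ) / (4 * (t:ℝ)))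
          = Real.logb 2 ((a:ℝ) / (t:ℝ)) - 2 := by
        rw [Real.logb_div (ne_of_gt ha0R) (ne_of_gt ht4R),
          Real.logb_div (ne_of_gt ha0R) (ne_of_gt ht0R), logb_four_mul ht0R]
        ring
      have hsqle : Real.sqrt ((a:ℝ) - 2*t) ≤ Real.sqrt a :=
        Real.sqrt_le_sqrt (by linarith)
      have : (k₀ : ℝ) ≤ 10000 * Real.sqrt a - 6 + 3 * Real.logb 2 ((a:ℝ)/(t:ℝ)) - 6 := by
        have := hstep1.trans_eq hstep2
        nlinarith [hsqle]
      push_cast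
      linarith
    · -- M-i : medium r
      push_neg at hc1 hc2
      set Q := a / r with hQdef
      set ρ := a % r with hρdef
      have hQ1 : 1 ≤ Q := (Nat.one_le_div_iff hr).2 hra.le
      have hQ10 : Q ≤ 10 := by
        calc a / r ≤ (10 * r) / r := Nat.div_le_div_right hc1
        _ = 10 := Nat.mul_div_cancel 10 hr
      have hdm : Q * r + ρ = a := by rw [hQdef, hρdef]; rw [Nat.mul_comm]; exact Nat.div_add_mod a r
      rcases Nat.eq_zero_or_pos ρ with hρ0 | hρpos
      · -- exact division
        have hQr : Q * r = a := by omega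
        have hnsq : SR (r:ℝ) ((Q:ℝ) * (r:ℝ)) Q := SR_nsq hr0R Q hQ1
        rw [show (Q:ℝ) * (r:ℝ) = (a:ℝ) by exact_mod_cast congrArg (Nat.cast (R := ℝ)) hQr] at hnsq
        have hfin : SR (a:ℝ) ((a:ℝ) + (r:ℝ)) (1 + Q) :=
          SR_glue ha0R ha0R hr0R (SR_square ha0R) (SR_sym hnsq)
        refine ⟨1 + Q, hfin, ?_⟩
        have : ((1 + Q : ℕ) : ℝ) ≤ 11 := by exact_mod_cast (by omega : 1 + Q ≤ 11)
        linarith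
      · -- with remainder, recurse on (r, ρ)
        have hρr : ρ < r := Nat.mod_lt _ hr
        obtain ⟨k₁, hSR₁, hB₁⟩ := IH r hra ρ hρpos hρr
        have haddn := SR_addnsq hr0R (by positivity : (0:ℝ) < (r:ℝ) + (ρ:ℝ)) hSR₁ (Q - 1)
        have heq : (r:ℝ) + (ρ:ℝ) + ((Q - 1 : ℕ):ℝ) * (r:ℝ) = (a:ℝ) := by
          have hN : r + ρ + (Q - 1) * r = a := by
            rcases Nat.exists_eq_succ_of_ne_zero (by omega : Q ≠ 0) with ⟨n, hn⟩
            rw [hn] at hdm ⊢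
            simp only [Nat.succ_sub_one, Nat.succ_mul] at hdm ⊢
            linarith [hdm]
          exact_mod_cast congrArg (Nat.cast (R := ℝ)) hN
        rw [heq] at haddn
        have hfin : SR (a:ℝ) ((a:ℝ) + (r:ℝ)) (1 + (k₁ + (Q - 1))) :=
          SR_glue ha0R ha0R hr0R (SR_square ha0R) (SR_sym haddn)
        refine ⟨1 + (k₁ + (Q - 1)), hfin, ?_⟩
        -- bound
        have hminρ1 : 1 ≤ min ρ (r - ρ) := le_min hρpos (by omega)
        have hminρR : (1:ℝ) ≤ ((min ρ (r - ρ) : ℕ) : ℝ) := by exact_mod_cast hminρ1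
        have hrR1 : (1:ℝ) ≤ (r:ℝ) := by exact_mod_cast hr
        have hlog1 : Real.logb 2 ((r:ℝ) / ((min ρ (r - ρ) : ℕ) : ℝ)) ≤ Real.logb 2 (r:ℝ) := by
          apply Real.logb_le_logb_of_le (by norm_num)
          · positivity
          · rw [div_le_iff₀ (by linarith : (0:ℝ) < ((min ρ (r - ρ) : ℕ) : ℝ))]
            nlinarith
        have hlog2 : 3 * Real.logb 2 (r:ℝ) ≤ 12 * Real.sqrt r := three_logb_le_sqrt hrR1
        have h400 : (400:ℝ) * r ≤ 361 * a := by
          have : 400 * r ≤ 361 * a := by omega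
          exact_mod_cast this
        have hsq19 : Real.sqrt (r:ℝ) ≤ (19/20) * Real.sqrt a := by
          have h1 : Real.sqrt (r:ℝ) ≤ Real.sqrt ((361/400) * (a:ℝ)) :=
            Real.sqrt_le_sqrt (by linarith)
          have h2 : Real.sqrt ((361/400) * (a:ℝ)) = (19/20) * Real.sqrt a := by
            rw [show (361/400:ℝ) = (19/20)^2 by norm_num,
              Real.sqrt_mul (by positivity) ((a:ℝ)), Real.sqrt_sq (by norm_num)]
          linarith
        have hQR : ((Q - 1 : ℕ) : ℝ) ≤ 9 := by exact_mod_cast (by omega : Q - 1 ≤ 9)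
        have hkcast : ((1 + (k₁ + (Q - 1)) : ℕ) : ℝ) = 1 + ((k₁:ℝ) + ((Q - 1 : ℕ):ℝ)) := by
          push_cast; ring
        rw [hkcast]
        linarith [hB₁, hlog1, hlog2, hsq19, hQR, hsqa, hlogb_nonneg]

lemma main (p q : ℕ) (hp : 0 < p) (hpq : p ≤ q) :
    ∃ k : ℕ, SR (p:ℝ) (q:ℝ) k ∧ (k:ℝ) ≤ (q:ℝ)/(p:ℝ) + 10012 * Real.sqrt p := by
  have hp0R : (0:ℝ) < (p:ℝ) := by exact_mod_cast hp
  have hp1R : (1:ℝ) ≤ (p:ℝ) := by exact_mod_cast hp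
  have hsqp : (1:ℝ) ≤ Real.sqrt p := by
    rw [show (1:ℝ) = Real.sqrt 1 by simp]
    exact Real.sqrt_le_sqrt hp1R
  have hdm : (q / p) * p + q % p = q := by rw [Nat.mul_comm]; exact Nat.div_add_mod q p
  have hQ1 : 1 ≤ q / p := (Nat.one_le_div_iff hp).2 hpq
  have hQle : ((q / p : ℕ):ℝ) ≤ (q:ℝ)/(p:ℝ) := by
    rw [le_div_iff₀ hp0R]
    exact_mod_cast Nat.div_mul_le_self q p
  rcases Nat.eq_zero_or_pos (q % p) with hr0 | hrpos
  · have hQp : (q / p) * p = q := by omega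
    have h := SR_nsq hp0R (q / p) hQ1
    rw [show ((q/p : ℕ):ℝ) * (p:ℝ) = (q:ℝ) by exact_mod_cast congrArg (Nat.cast (R:=ℝ)) hQp] at h
    exact ⟨q / p, h, by nlinarith [Real.sqrt_nonneg (p:ℝ)]⟩
  · have hrp : q % p < p := Nat.mod_lt _ hp
    obtain ⟨k₁, hSR₁, hB₁⟩ := core p (q % p) hrpos hrp
    have haddn := SR_addnsq hp0R
      (by positivity : (0:ℝ) < (p:ℝ) + ((q % p : ℕ):ℝ)) hSR₁ (q / p - 1)
    have heq : (p:ℝ) + ((q % p : ℕ):ℝ) + ((q / p - 1 : ℕ):ℝ) * (p:ℝ) = (q:ℝ) := by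
      have hN : p + q % p + (q / p - 1) * p = q := by
        rcases Nat.exists_eq_succ_of_ne_zero (by omega : q / p ≠ 0) with ⟨n, hn⟩
        rw [hn] at hdm ⊢
        simp only [Nat.succ_sub_one, Nat.succ_mul] at hdm ⊢
        linarith [hdm]
      exact_mod_cast congrArg (Nat.cast (R := ℝ)) hN
    rw [heq] at haddn
    refine ⟨k₁ + (q / p - 1), haddn, ?_⟩
    -- bound
    have hmin1 : 1 ≤ min (q % p) (p - q % p) := le_min hrpos (by omega)
    have hminR : (1:ℝ) ≤ ((min (q % p) (p - q % p) : ℕ):ℝ) := by exact_mod_cast hmin1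
    have hlog1 : Real.logb 2 ((p:ℝ) / ((min (q % p) (p - q % p) : ℕ):ℝ))
        ≤ Real.logb 2 (p:ℝ) := by
      apply Real.logb_le_logb_of_le (by norm_num)
      · positivity
      · rw [div_le_iff₀ (by linarith : (0:ℝ) < ((min (q % p) (p - q % p) : ℕ):ℝ))]
        nlinarith
    have hlog2 : 3 * Real.logb 2 (p:ℝ) ≤ 12 * Real.sqrt p := three_logb_le_sqrt hp1R
    have hQm1 : ((q / p - 1 : ℕ):ℝ) ≤ (q:ℝ)/(p:ℝ) - 1 := by
      have : ((q / p - 1 : ℕ):ℝ) = ((q/p : ℕ):ℝ) - 1 := by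
        have : (1:ℕ) ≤ q / p := hQ1
        push_cast [Nat.cast_sub this]
        ring
      rw [this]
      linarith
    have hkcast : ((k₁ + (q / p - 1) : ℕ):ℝ) = (k₁:ℝ) + ((q / p - 1 : ℕ):ℝ) := by push_cast; ring
    rw [hkcast]
    linarith [hB₁, hlog1, hlog2, hQm1]

end SIRTP

/-- There is a constant `C > 0` such that `SIRTP(p,q)` (`p ≤ q`) always has a solution
of size at most `q/p + C·√p`. -/
theorem sirtp_upper_bound :
    ∃ C : ℝ, 0 < C ∧ ∀ p q : ℕ, 0 < p → p ≤ q →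
      ∃ k : ℕ, StrictPair (p : ℝ) (q : ℝ) k ∧
        (k : ℝ) ≤ (q : ℝ) / (p : ℝ) + C * Real.sqrt (p : ℝ) := by
  refine ⟨10012, by norm_num, fun p q hp hpq => ?_⟩
  obtain ⟨k, hk, hb⟩ := SIRTP.main p q hp hpq
  exact ⟨k, hk, hb⟩
end

section
/- For every real number ε > 0 and every positive integer m, there exist positive integers p and q with p < q < (1+ε)·p such that every strictly isomorphic rectangle partition pair for (p,q) has size greater than m. -/
open scoped Classical

/-!
Fix the size `k`. The combinatorial type of a strict pair consists of the matching `σ` and,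
for each of its two partitions, the order pattern of the `x`-coordinates of all vertical sides
together with `0` and the width; there are finitely many types. If partitions `P` and `P'` share
a pattern, some continuous monotone `f` carries the vertical sides of `P` onto those of `P'`, and
summing the measure `df ⊗ dy` over the modules of `P` gives
`∑ width (P' i) * height (P i) = width P' * height P`. Applied to both partitions of two pairs of
the same type and linked through `σ`, this gives `p' * q = q' * p`: each type realizes at most
one aspect ratio. So sizes `≤ m` realize finitely many ratios, whereas the ratios `n / (n + 1)`
are infinitely many, and `n + 1 < (1 + ε) n` once `n > 1 / ε`.
-/

open MeasureTheory Set

theorem exists_continuous_monotone_eqOn (s : Finset ℝ) {φ : ℝ → ℝ} (hφ : MonotoneOn φ s) :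
    ∃ f : ℝ → ℝ, Continuous f ∧ Monotone f ∧ EqOn f φ s := by
  induction s using Finset.induction_on_max with
  | empty => exact ⟨fun _ => 0, continuous_const, monotone_const, by simp⟩
  | insert a s hlt ih =>
    rcases s.eq_empty_or_nonempty with rfl | hs
    · exact ⟨fun _ => φ a, continuous_const, monotone_const, by simp⟩
    obtain ⟨f, hfc, hfm, hfφ⟩ := ih (hφ.mono (by simp))
    set b := s.max' hs
    have hb : b ∈ s := s.max'_mem hs
    have hba : b < a := hlt b hb
    have hc : 0 ≤ (φ a - φ b) / (a - b) :=
      div_nonneg (sub_nonneg.2 (hφ (by simp [hb]) (by simp) hba.le)) (sub_nonneg.2 hba.le)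
    -- continue `f` beyond the last node `b` by the segment joining `(b, φ b)` to `(a, φ a)`
    refine ⟨fun x => f (min x b) + (φ a - φ b) / (a - b) * (max x b - b), by fun_prop,
      fun x y hxy => add_le_add (hfm (min_le_min_right b hxy))
        (mul_le_mul_of_nonneg_left (sub_le_sub_right (max_le_max_right b hxy) b) hc), ?_⟩
    intro x hx
    rcases Finset.mem_insert.1 hx with rfl | hx
    · simp only [min_eq_right hba.le, max_eq_left hba.le, hfφ hb]
      field_simp [sub_ne_zero.2 hba.ne']
      ring
    · have hxb : x ≤ b := s.le_max' x hx
      simp [min_eq_left hxb, max_eq_right hxb, hfφ hx]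

theorem exists_continuous_monotone_comp_eq {ι : Type*} [Finite ι] {u v : ι → ℝ}
    (h : ∀ i j, u i ≤ u j → v i ≤ v j) :
    ∃ f : ℝ → ℝ, Continuous f ∧ Monotone f ∧ f ∘ u = v := by
  have := Fintype.ofFinite ι
  have hext : ∀ i, Function.extend u v 0 (u i) = v i := by
    intro i
    have hex : ∃ j, u j = u i := ⟨i, rfl⟩
    rw [Function.extend_def, dif_pos hex]
    exact le_antisymm (h _ _ hex.choose_spec.le) (h _ _ hex.choose_spec.ge)
  have hmono : MonotoneOn (Function.extend u v 0) (Finset.univ.image u : Finset ℝ) := by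
    simp only [Finset.coe_image, Finset.coe_univ, image_univ]
    rintro _ ⟨i, rfl⟩ _ ⟨j, rfl⟩ hij
    rw [hext, hext]
    exact h i j hij
  obtain ⟨f, hfc, hfm, hfu⟩ := exists_continuous_monotone_eqOn _ hmono
  exact ⟨f, hfc, hfm, funext fun i => (hfu (by simp)).trans (hext i)⟩

namespace Rect

theorem aedisjoint_carrier_of_inner {r s : Rect} (h : r.inner ∩ s.inner = ∅)
    (μ ν : Measure ℝ) [NullSingletonClass μ] [NullSingletonClass ν] [SFinite ν] :
    AEDisjoint (μ.prod ν) r.carrier s.carrier := by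
  rw [inner, inner, prod_inter_prod, Ioo_inter_Ioo, Ioo_inter_Ioo, prod_eq_empty_iff,
    Ioo_eq_empty_iff, Ioo_eq_empty_iff, not_lt, not_lt] at h
  rw [AEDisjoint, carrier, carrier, prod_inter_prod, Icc_inter_Icc, Icc_inter_Icc,
    Measure.prod_prod]
  rcases h with h | h
  · rw [(subsingleton_Icc_of_ge h).measure_zero, zero_mul]
  · rw [(subsingleton_Icc_of_ge h).measure_zero, mul_zero]

end Rect

namespace IsRectPartition

variable {k : ℕ} {W H : ℝ} {P : Fin k → Rect}

theorem sum_measure_prod (hP : IsRectPartition W H P)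
    (μ ν : Measure ℝ) [NullSingletonClass μ] [NullSingletonClass ν] [SFinite ν] :
    ∑ i, μ (Icc (P i).x1 (P i).x2) * ν (Icc (P i).y1 (P i).y2) = μ (Icc 0 W) * ν (Icc 0 H) := by
  have hunion := measure_iUnion₀ (μ := μ.prod ν)
    (fun i j hij => Rect.aedisjoint_carrier_of_inner (hP.2.1 i j hij) μ ν)
    (fun i => (measurableSet_Icc.prod measurableSet_Icc).nullMeasurableSet)
  rw [hP.2.2, Measure.prod_prod, tsum_fintype] at hunion
  simp only [hunion, Rect.carrier, Measure.prod_prod]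

theorem sum_stieltjes_mul_height (hP : IsRectPartition W H P) (hW : 0 ≤ W) (hH : 0 ≤ H)
    (f : StieltjesFunction ℝ) (hf : Continuous f) :
    ∑ i, (f (P i).x2 - f (P i).x1) * (P i).height = (f W - f 0) * H := by
  simp only [Rect.height]
  have hleft : ∀ x, Function.leftLim f x = f x := fun x => hf.continuousWithinAt.leftLim_eq
  have : NullSingletonClass f.measure :=
    ⟨fun x => by rw [f.measure_singleton, hleft, sub_self, ENNReal.ofReal_zero]⟩
  have hfx : ∀ i, 0 ≤ f (P i).x2 - f (P i).x1 := fun i => sub_nonneg.2 (f.mono (hP.1 i).1.le)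
  have hy : ∀ i, 0 ≤ (P i).y2 - (P i).y1 := fun i => sub_nonneg.2 (hP.1 i).2.le
  have h := hP.sum_measure_prod f.measure volume
  simp only [f.measure_Icc, hleft, Real.volume_Icc, sub_zero] at h
  rw [← ENNReal.ofReal_mul (sub_nonneg.2 (f.mono hW))] at h
  simp_rw [← ENNReal.ofReal_mul (hfx _)] at h
  rw [← ENNReal.ofReal_sum_of_nonneg fun i _ => mul_nonneg (hfx i) (hy i),
    ENNReal.ofReal_eq_ofReal_iff (Finset.sum_nonneg fun i _ => mul_nonneg (hfx i) (hy i))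
      (mul_nonneg (sub_nonneg.2 (f.mono hW)) hH)] at h
  exact h

end IsRectPartition

section OrderType

variable {k : ℕ}

abbrev XEnd (k : ℕ) : Type := Fin k ⊕ Fin k ⊕ Fin 2

/-- The ends `0, W` of the outer rectangle are included so that a monotone map matching two such
families fixes `0` and sends `W` to `W'`. -/
def xEnds (W : ℝ) (P : Fin k → Rect) : XEnd k → ℝ :=
  Sum.elim (fun i => (P i).x1) (Sum.elim (fun i => (P i).x2) ![0, W])

def xOrderType (W : ℝ) (P : Fin k → Rect) : XEnd k → XEnd k → Prop :=
  fun a b => xEnds W P a ≤ xEnds W P b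

theorem IsRectPartition.sum_width_mul_height_of_xOrderType_eq {W H W' : ℝ}
    {P P' : Fin k → Rect} (hP : IsRectPartition W H P) (hW : 0 ≤ W) (hH : 0 ≤ H)
    (h : xOrderType W P = xOrderType W' P') :
    ∑ i, (P' i).width * (P i).height = W' * H := by
  obtain ⟨f, hfc, hfm, hf⟩ := exists_continuous_monotone_comp_eq (u := xEnds W P)
    (v := xEnds W' P') fun a b => (congrFun₂ h a b).mp
  have hval : ∀ a, f (xEnds W P a) = xEnds W' P' a := congrFun hf
  have := hP.sum_stieltjes_mul_height hW hH ⟨f, hfm, fun x => hfc.continuousWithinAt⟩ hfc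
  have hx1 : ∀ i, f (P i).x1 = (P' i).x1 := fun i => hval (.inl i)
  have hx2 : ∀ i, f (P i).x2 = (P' i).x2 := fun i => hval (.inr (.inl i))
  have h0 : f 0 = 0 := hval (.inr (.inr 0))
  have hW' : f W = W' := hval (.inr (.inr 1))
  simpa [Rect.width, hx1, hx2, h0, hW'] using this

end OrderType

theorem IsStrictIsoPair.mul_eq_mul_of_xOrderType_eq {a b c d a' b' c' d' : ℝ} {k : ℕ}
    {P1 P2 P1' P2' : Fin k → Rect} {σ : Equiv.Perm (Fin k)}
    (h : IsStrictIsoPair a b c d P1 P2 σ) (h' : IsStrictIsoPair a' b' c' d' P1' P2' σ)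
    (ha : 0 ≤ a) (hb : 0 ≤ b) (hc : 0 ≤ c) (hd : 0 ≤ d)
    (h1 : xOrderType a P1 = xOrderType a' P1') (h2 : xOrderType c P2 = xOrderType c' P2') :
    a' * b = c' * d :=
  calc a' * b = ∑ i, (P1' i).width * (P1 i).height :=
        (h.1.sum_width_mul_height_of_xOrderType_eq ha hb h1).symm
    _ = ∑ i, (P2' (σ i)).width * (P2 (σ i)).height := by
        simp only [(h.2.2 _).2, (h'.2.2 _).1]
    _ = ∑ j, (P2' j).width * (P2 j).height :=
        Equiv.sum_comp σ fun j => (P2' j).width * (P2 j).height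
    _ = c' * d := h.2.1.sum_width_mul_height_of_xOrderType_eq hc hd h2

def strictPairRatios (k : ℕ) : Set ℝ :=
  {p / q | (p : ℝ) (q : ℝ) (_ : 0 < p) (_ : 0 < q) (_ : StrictPair p q k)}

theorem finite_strictPairRatios (k : ℕ) : (strictPairRatios k).Finite := by
  let T := Equiv.Perm (Fin k) × (XEnd k → XEnd k → Prop) × (XEnd k → XEnd k → Prop)
  let ratiosOfType (t : T) : Set ℝ := {p / q | (p : ℝ) (q : ℝ) (_ : 0 < p) (_ : 0 < q)
    (_ : ∃ P1 P2, IsStrictIsoPair p q q p P1 P2 t.1 ∧ xOrderType p P1 = t.2.1 ∧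
      xOrderType q P2 = t.2.2)}
  have hsub : strictPairRatios k ⊆ ⋃ t, ratiosOfType t := by
    rintro _ ⟨p, q, hp, hq, ⟨P1, P2, σ, h⟩, rfl⟩
    exact mem_iUnion.2 ⟨(σ, _, _), p, q, hp, hq, ⟨P1, P2, h, rfl, rfl⟩, rfl⟩
  refine (finite_iUnion fun t => Subsingleton.finite ?_).subset hsub
  rintro _ ⟨p, q, hp, hq, ⟨P1, P2, h, h1, h2⟩, rfl⟩
    _ ⟨p', q', hp', hq', ⟨P1', P2', h', h1', h2'⟩, rfl⟩
  have := h.mul_eq_mul_of_xOrderType_eq h' hp.le hq.le hq.le hp.le (h1.trans h1'.symm)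
    (h2.trans h2'.symm)
  rw [div_eq_div_iff hq.ne' hq'.ne']
  linarith

theorem sirtp_no_constant_bound_general (ε : ℝ) (hε : 0 < ε) (m : ℕ) :
    ∃ p q : ℕ, 0 < p ∧ p < q ∧ (q : ℝ) < (1 + ε) * (p : ℝ) ∧
      ∀ k : ℕ, StrictPair (p : ℝ) (q : ℝ) k → m < k := by
  obtain ⟨N, hN⟩ := exists_nat_gt ε⁻¹
  have hεN : 1 < ε * N := by rwa [inv_lt_iff_one_lt_mul₀' hε] at hN
  by_contra! hsmall
  have hmem : ∀ n : ℕ,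
      ((N + n + 1 : ℕ) : ℝ) / (N + n + 2 : ℕ) ∈ ⋃ k ∈ {k | k ≤ m}, strictPairRatios k := by
    intro n
    obtain ⟨k, hk, hkm⟩ := hsmall (N + n + 1) (N + n + 2) (by omega) (by omega) (by
      push_cast
      nlinarith)
    exact mem_iUnion₂.2 ⟨k, hkm, _, _, by positivity, by positivity, hk, rfl⟩
  refine Set.infinite_of_injective_forall_mem (fun x y hxy => ?_) hmem
    ((finite_le_nat m).biUnion fun k _ => finite_strictPairRatios k)
  rw [div_eq_div_iff (by positivity) (by positivity)] at hxy
  push_cast at hxy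
  exact_mod_cast (by linear_combination hxy : (x : ℝ) = y)

/-- No constant bound: for any `ε > 0` and `m`, some `p < q < (1+ε)p` needs size `> m`. -/
theorem sirtp_no_constant_bound (ε : ℝ) (hε : 0 < ε) (m : ℕ) (hm : 0 < m) :
    ∃ p q : ℕ, 0 < p ∧ p < q ∧ (q : ℝ) < (1 + ε) * (p : ℝ) ∧
      ∀ k : ℕ, StrictPair (p : ℝ) (q : ℝ) k → m < k :=
  sirtp_no_constant_bound_general ε hε m
end

section
/- Let p and q be positive real numbers with p ≤ q. Then every strictly isomorphic rectangle partition pair for (p,q) has size at least q/p. (In particular, ⌈q/p⌉ is a lower bound on the minimum size of a solution to SRTP(p,q).) -/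
open scoped Classical

open MeasureTheory

/-- Trivial lower bound: every solution of `SRTP(p,q)` (`p ≤ q`) has size at least `q/p`. -/

theorem srtp_trivial_lower_bound (p q : ℝ) (hp : 0 < p) (hpq : p ≤ q)
    (k : ℕ) (h : StrictPair p q k) : q / p ≤ (k : ℝ) := by
  obtain ⟨P1, P2, σ, h1, h2, hσ⟩ := h
  have hq : 0 < q := lt_of_lt_of_le hp hpq
  -- bounds on sides from containment
  have bound : ∀ {n : ℕ} (W H : ℝ) (P : Fin n → Rect), IsRectPartition W H P →
      ∀ i, (P i).width ≤ W ∧ (P i).height ≤ H := by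
    intro n W H P hP i
    have hsub : (P i).carrier ⊆ Set.Icc (0:ℝ) W ×ˢ Set.Icc (0:ℝ) H := by
      rw [← hP.2.2]; exact Set.subset_iUnion (fun j => (P j).carrier) i
    have hnd := hP.1 i
    have h11 : ((P i).x1, (P i).y1) ∈ (P i).carrier := by
      constructor <;> constructor <;> simp [le_of_lt hnd.1, le_of_lt hnd.2]
    have h22 : ((P i).x2, (P i).y2) ∈ (P i).carrier := by
      constructor <;> constructor <;> simp [le_of_lt hnd.1, le_of_lt hnd.2]
    have m1 := hsub h11
    have m2 := hsub h22
    obtain ⟨⟨hx1, _⟩, ⟨hy1, _⟩⟩ := m1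
    obtain ⟨⟨_, hx2⟩, ⟨_, hy2⟩⟩ := m2
    exact ⟨by simp [Rect.width]; linarith, by simp [Rect.height]; linarith⟩
  have hW1 : ∀ i, (P1 i).width ≤ p := fun i => (bound p q P1 h1 i).1
  have hH1 : ∀ i, (P1 i).height ≤ p := by
    intro i
    rw [(hσ i).2]
    exact (bound q p P2 h2 (σ i)).2
  have hWpos : ∀ i, 0 ≤ (P1 i).width := fun i => le_of_lt (by
    have := (h1.1 i).1; simp [Rect.width]; linarith)
  have hHpos : ∀ i, 0 ≤ (P1 i).height := fun i => le_of_lt (by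
    have := (h1.1 i).2; simp [Rect.height]; linarith)
  -- volume of a carrier
  have hvol : ∀ r : Rect, volume r.carrier
      = ENNReal.ofReal r.width * ENNReal.ofReal r.height := by
    intro r
    rw [Rect.carrier, MeasureTheory.Measure.volume_eq_prod,
      MeasureTheory.Measure.prod_prod, Real.volume_Icc, Real.volume_Icc]
    rfl
  have hbig : volume (Set.Icc (0:ℝ) p ×ˢ Set.Icc (0:ℝ) q)
      = ENNReal.ofReal p * ENNReal.ofReal q := by
    rw [MeasureTheory.Measure.volume_eq_prod, MeasureTheory.Measure.prod_prod,
      Real.volume_Icc, Real.volume_Icc, sub_zero, sub_zero]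
  have key : ENNReal.ofReal (p * q) ≤ ENNReal.ofReal ((k : ℝ) * (p * p)) := by
    calc ENNReal.ofReal (p * q) = ENNReal.ofReal p * ENNReal.ofReal q := by
          rw [ENNReal.ofReal_mul hp.le]
      _ = volume (Set.Icc (0:ℝ) p ×ˢ Set.Icc (0:ℝ) q) := hbig.symm
      _ = volume (⋃ i, (P1 i).carrier) := by rw [h1.2.2]
      _ ≤ ∑ i, volume (P1 i).carrier := measure_iUnion_fintype_le _ _
      _ ≤ ∑ _i : Fin k, ENNReal.ofReal (p * p) := by
          refine Finset.sum_le_sum fun i _ => ?_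
          rw [hvol, ← ENNReal.ofReal_mul (hWpos i)]
          exact ENNReal.ofReal_le_ofReal (by
            have := mul_le_mul (hW1 i) (hH1 i) (hHpos i) hp.le
            linarith)
      _ = (k : ℕ) • ENNReal.ofReal (p * p) := by
          rw [Finset.sum_const, Finset.card_univ, Fintype.card_fin]
      _ = ENNReal.ofReal ((k : ℝ) * (p * p)) := by
          rw [nsmul_eq_mul,
            ENNReal.ofReal_mul (show (0:ℝ) ≤ (k:ℝ) by positivity),
            ENNReal.ofReal_natCast, ENNReal.ofReal_mul hp.le]
  have hreal : p * q ≤ (k : ℝ) * (p * p) :=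
    (ENNReal.ofReal_le_ofReal_iff (by positivity)).mp key
  rw [div_le_iff₀ hp]
  nlinarith [hp]
end

section
/- Let p be any positive integer. Then there exists a strictly isomorphic rectangle partition pair for (p, p+1) of size at most 4·√p + 1. -/
/-!
Strictly isomorphic pairs for `a × b` and `b × a` are built from four moves: glue a `b × b`
square onto the side of length `b` (`(a, b) ↦ (a + b, b)`, one new module), scale, glue two
`s × s` squares onto a side of length `2s` (`(2s, b) ↦ (2s, b + s)`, two new modules), and
go from `(q, q + 1)` to `(q + 1, q + 2)` with three new modules. From a pair of size `k` for
`(t, t + 1)` they give pairs for `(4t + r, 4t + r + 1)`, `r = 1, 2, 3, 4`, of sizes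
`k + 3, k + 3, k + 6, k + 9`, and these costs stay below `4√(4t + r) - 4√t` once `t ≥ 4`.
For `p ≤ 16`, one `p × p` square and `p` unit squares give a pair of size `p + 1 ≤ 4√p + 1`.
-/

open scoped Classical

open Set

namespace Rect

variable {r s : Rect} {c : ℝ}

def SameShape (r s : Rect) : Prop := r.width = s.width ∧ r.height = s.height

lemma SameShape.symm (h : r.SameShape s) : s.SameShape r := ⟨h.1.symm, h.2.symm⟩

lemma bounds_of_carrier_subset (hr : r.Nondeg) (h : r.carrier ⊆ s.carrier) :
    s.x1 ≤ r.x1 ∧ r.x2 ≤ s.x2 ∧ s.y1 ≤ r.y1 ∧ r.y2 ≤ s.y2 := by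
  have h₁ := h (show (r.x1, r.y1) ∈ r.carrier from ⟨⟨le_rfl, hr.1.le⟩, le_rfl, hr.2.le⟩)
  have h₂ := h (show (r.x2, r.y2) ∈ r.carrier from ⟨⟨hr.1.le, le_rfl⟩, hr.2.le, le_rfl⟩)
  exact ⟨h₁.1.1, h₂.1.2, h₁.2.1, h₂.2.2⟩

lemma disjoint_inner_of_x2_le (h : r.x2 ≤ s.x1) : Disjoint r.inner s.inner :=
  disjoint_left.2 fun _ hr hs => lt_asymm (hr.1.2.trans_le h) hs.1.1

lemma disjoint_inner_of_y2_le (h : r.y2 ≤ s.y1) : Disjoint r.inner s.inner :=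
  disjoint_left.2 fun _ hr hs => lt_asymm (hr.2.2.trans_le h) hs.2.1

def scale (c : ℝ) (r : Rect) : Rect := ⟨c * r.x1, c * r.x2, c * r.y1, c * r.y2⟩

lemma width_scale : (r.scale c).width = c * r.width := (mul_sub ..).symm

lemma height_scale : (r.scale c).height = c * r.height := (mul_sub ..).symm

lemma SameShape.scale (c : ℝ) (h : r.SameShape s) : (r.scale c).SameShape (s.scale c) := by
  rw [SameShape, width_scale, width_scale, height_scale, height_scale, h.1, h.2]
  exact ⟨rfl, rfl⟩

lemma Nondeg.scale (hc : 0 < c) (h : r.Nondeg) : (r.scale c).Nondeg :=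
  ⟨mul_lt_mul_of_pos_left h.1 hc, mul_lt_mul_of_pos_left h.2 hc⟩

lemma carrier_scale (hc : 0 < c) (r : Rect) :
    (r.scale c).carrier = Prod.map (· / c) (· / c) ⁻¹' r.carrier := by
  ext z
  simp only [carrier, scale, mem_preimage, Prod.map, mem_prod, mem_Icc, le_div_iff₀' hc,
    div_le_iff₀' hc]

lemma inner_scale (hc : 0 < c) (r : Rect) :
    (r.scale c).inner = Prod.map (· / c) (· / c) ⁻¹' r.inner := by
  ext z
  simp only [inner, scale, mem_preimage, Prod.map, mem_prod, mem_Ioo, lt_div_iff₀' hc,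
    div_lt_iff₀' hc]

end Rect

structure IsTiling (A : Set (ℝ × ℝ)) (l : List Rect) : Prop where
  nondeg : ∀ r ∈ l, r.Nondeg
  pairwise_disjoint : l.Pairwise fun r s => Disjoint r.inner s.inner
  biUnion_eq : ⋃ r ∈ l, r.carrier = A

namespace IsTiling

variable {A B : Set (ℝ × ℝ)} {l m : List Rect}

lemma singleton {r : Rect} (h : r.Nondeg) : IsTiling r.carrier [r] where
  nondeg := by simpa using h
  pairwise_disjoint := List.pairwise_singleton _ _
  biUnion_eq := by simp

lemma append (hl : IsTiling A l) (hm : IsTiling B m)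
    (hlm : ∀ r ∈ l, ∀ s ∈ m, Disjoint r.inner s.inner) : IsTiling (A ∪ B) (l ++ m) where
  nondeg := List.forall_mem_append.2 ⟨hl.nondeg, hm.nondeg⟩
  pairwise_disjoint := List.pairwise_append.2 ⟨hl.pairwise_disjoint, hm.pairwise_disjoint, hlm⟩
  biUnion_eq := by
    rw [← hl.biUnion_eq, ← hm.biUnion_eq]
    ext
    simp [or_and_right, exists_or]

lemma perm (h : IsTiling A l) (hlm : l.Perm m) : IsTiling A m where
  nondeg r hr := h.nondeg r (hlm.mem_iff.2 hr)
  pairwise_disjoint := (hlm.pairwise_iff fun h => h.symm).1 h.pairwise_disjoint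
  biUnion_eq := by simp only [← hlm.mem_iff, h.biUnion_eq]

lemma bounds {R r : Rect} (h : IsTiling R.carrier l) (hr : r ∈ l) :
    R.x1 ≤ r.x1 ∧ r.x2 ≤ R.x2 ∧ R.y1 ≤ r.y1 ∧ r.y2 ≤ R.y2 :=
  Rect.bounds_of_carrier_subset (h.nondeg r hr) (h.biUnion_eq ▸ subset_biUnion_of_mem hr)

lemma append_horiz {x₁ x₂ x₃ y₁ y₂ : ℝ} (h₁₂ : x₁ ≤ x₂) (h₂₃ : x₂ ≤ x₃)
    (hl : IsTiling (Rect.mk x₁ x₂ y₁ y₂).carrier l)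
    (hm : IsTiling (Rect.mk x₂ x₃ y₁ y₂).carrier m) :
    IsTiling (Rect.mk x₁ x₃ y₁ y₂).carrier (l ++ m) := by
  have := hl.append hm fun r hr s hs =>
    Rect.disjoint_inner_of_x2_le ((hl.bounds hr).2.1.trans (hm.bounds hs).1)
  rwa [Rect.carrier, Rect.carrier, ← union_prod, Icc_union_Icc_eq_Icc h₁₂ h₂₃] at this

lemma append_vert {x₁ x₂ y₁ y₂ y₃ : ℝ} (h₁₂ : y₁ ≤ y₂) (h₂₃ : y₂ ≤ y₃)
    (hl : IsTiling (Rect.mk x₁ x₂ y₁ y₂).carrier l)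
    (hm : IsTiling (Rect.mk x₁ x₂ y₂ y₃).carrier m) :
    IsTiling (Rect.mk x₁ x₂ y₁ y₃).carrier (l ++ m) := by
  have := hl.append hm fun r hr s hs =>
    Rect.disjoint_inner_of_y2_le ((hl.bounds hr).2.2.2.trans (hm.bounds hs).2.2.1)
  rwa [Rect.carrier, Rect.carrier, ← prod_union, Icc_union_Icc_eq_Icc h₁₂ h₂₃] at this

lemma scale {c : ℝ} (hc : 0 < c) (h : IsTiling A l) :
    IsTiling (Prod.map (· / c) (· / c) ⁻¹' A) (l.map (Rect.scale c)) where
  nondeg := List.forall_mem_map.2 fun r hr => (h.nondeg r hr).scale hc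
  pairwise_disjoint := List.pairwise_map.2 <| h.pairwise_disjoint.imp fun hrs => by
    simpa only [Rect.inner_scale hc] using hrs.preimage _
  biUnion_eq := by
    simp only [List.mem_map, iUnion_exists, biUnion_and', iUnion_iUnion_eq_right,
      Rect.carrier_scale hc, ← preimage_iUnion₂, h.biUnion_eq]

lemma isRectPartition {W H : ℝ} {n : ℕ} {f : Fin n → Rect}
    (h : IsTiling (Rect.mk 0 W 0 H).carrier (List.ofFn f)) : IsRectPartition W H f := by
  refine ⟨fun i => h.nondeg _ ((List.mem_ofFn' f _).2 ⟨i, rfl⟩), fun i j hij => ?_, ?_⟩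
  · have hlt := List.pairwise_ofFn.1 h.pairwise_disjoint
    rw [← disjoint_iff_inter_eq_empty]
    rcases hij.lt_or_gt with hij | hij
    exacts [hlt hij, (hlt hij).symm]
  · calc ⋃ i, (f i).carrier = ⋃ r ∈ List.ofFn f, r.carrier := by simp [List.mem_ofFn']
      _ = _ := h.biUnion_eq

end IsTiling

def StrictPairList (a b : ℝ) (k : ℕ) : Prop :=
  ∃ l : List (Rect × Rect), l.length = k ∧
    IsTiling (Rect.mk 0 a 0 b).carrier (l.map Prod.fst) ∧
    IsTiling (Rect.mk 0 b 0 a).carrier (l.map Prod.snd) ∧ ∀ p ∈ l, p.1.SameShape p.2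

namespace StrictPairList

variable {a b : ℝ} {k : ℕ}

lemma strictPairGen (h : StrictPairList a b k) : StrictPairGen a b b a k := by
  obtain ⟨l, rfl, hA, hB, hl⟩ := h
  refine ⟨fun i => (l.get i).1, fun i => (l.get i).2, Equiv.refl _, ?_, ?_,
    fun i => hl _ (List.get_mem l i)⟩
  · exact IsTiling.isRectPartition (by simpa [List.map_ofFn] using hA)
  · exact IsTiling.isRectPartition (by simpa [List.map_ofFn] using hB)

lemma symm (h : StrictPairList a b k) : StrictPairList b a k := by
  obtain ⟨l, rfl, hA, hB, hl⟩ := h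
  refine ⟨l.map Prod.swap, List.length_map _, ?_, ?_, ?_⟩
  · simpa [List.map_map, Function.comp_def] using hB
  · simpa [List.map_map, Function.comp_def] using hA
  · exact List.forall_mem_map.2 fun p hp => (hl p hp).symm

lemma square (ha : 0 < a) : StrictPairList a a 1 :=
  ⟨[(⟨0, a, 0, a⟩, ⟨0, a, 0, a⟩)], rfl, .singleton ⟨ha, ha⟩, .singleton ⟨ha, ha⟩,
    by simp [Rect.SameShape]⟩

lemma scale {c : ℝ} (hc : 0 < c) (h : StrictPairList a b k) :
    StrictPairList (c * a) (c * b) k := by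
  obtain ⟨l, rfl, hA, hB, hl⟩ := h
  refine ⟨l.map fun p => (p.1.scale c, p.2.scale c), List.length_map _, ?_, ?_, ?_⟩
  · simpa [List.map_map, Function.comp_def, ← Rect.carrier_scale hc, Rect.scale]
      using hA.scale hc
  · simpa [List.map_map, Function.comp_def, ← Rect.carrier_scale hc, Rect.scale]
      using hB.scale hc
  · exact List.forall_mem_map.2 fun p hp => (hl p hp).scale c

lemma add_square (ha : 0 ≤ a) (hb : 0 < b) (h : StrictPairList a b k) :
    StrictPairList (a + b) b (k + 1) := by
  obtain ⟨l, rfl, hA, hB, hl⟩ := h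
  refine ⟨l ++ [(⟨a, a + b, 0, b⟩, ⟨0, b, a, a + b⟩)], by simp, ?_, ?_, ?_⟩
  · rw [List.map_append]
    exact hA.append_horiz ha (by linarith) (.singleton ⟨by linarith, hb⟩)
  · rw [List.map_append]
    exact hB.append_vert ha (by linarith) (.singleton ⟨hb, by linarith⟩)
  · exact List.forall_mem_append.2 ⟨hl, by simp [Rect.SameShape, Rect.width, Rect.height]⟩

lemma add_two_squares {s : ℝ} (hb : 0 ≤ b) (hs : 0 < s) (h : StrictPairList (2 * s) b k) :
    StrictPairList (2 * s) (b + s) (k + 2) := by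
  obtain ⟨l, rfl, hA, hB, hl⟩ := h
  refine ⟨l ++ [(⟨0, s, b, b + s⟩, ⟨b, b + s, 0, s⟩),
    (⟨s, 2 * s, b, b + s⟩, ⟨b, b + s, s, 2 * s⟩)], by simp, ?_, ?_, ?_⟩
  · rw [List.map_append]
    exact hA.append_vert hb (by linarith) <| IsTiling.append_horiz (l := [_]) (m := [_])
      hs.le (by linarith) (.singleton ⟨hs, by linarith⟩) (.singleton ⟨by linarith, by linarith⟩)
  · rw [List.map_append]
    exact hB.append_horiz hb (by linarith) <| IsTiling.append_vert (l := [_]) (m := [_])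
      hs.le (by linarith) (.singleton ⟨by linarith, hs⟩) (.singleton ⟨by linarith, by linarith⟩)
  · refine List.forall_mem_append.2 ⟨hl, ?_⟩
    simp only [List.mem_cons, List.not_mem_nil, or_false, forall_eq_or_imp, forall_eq]
    refine ⟨⟨?_, ?_⟩, ⟨?_, ?_⟩⟩ <;> simp only [Rect.width, Rect.height] <;> ring

lemma succ {q : ℝ} (hq : 0 < q) (h : StrictPairList q (q + 1) k) :
    StrictPairList (q + 1) (q + 2) (k + 3) := by
  obtain ⟨l, rfl, hA, hB, hl⟩ := h
  set top : Rect × Rect := (⟨0, q, q + 1, q + 2⟩, ⟨0, q, q, q + 1⟩)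
  set corner : Rect × Rect := (⟨q, q + 1, q + 1, q + 2⟩, ⟨q, q + 1, q, q + 1⟩)
  set side : Rect × Rect := (⟨q, q + 1, 0, q + 1⟩, ⟨q + 1, q + 2, 0, q + 1⟩)
  refine ⟨l ++ [top, corner, side], by simp, ?_, ?_, ?_⟩
  · have hleft : IsTiling (Rect.mk 0 q 0 (q + 2)).carrier (l.map Prod.fst ++ [top.1]) :=
      hA.append_vert (by linarith) (by linarith) (.singleton ⟨hq, by linarith⟩)
    have hright : IsTiling (Rect.mk q (q + 1) 0 (q + 2)).carrier [side.1, corner.1] :=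
      IsTiling.append_vert (l := [_]) (m := [_]) (by linarith) (by linarith)
        (.singleton ⟨by linarith, by linarith⟩) (.singleton ⟨by linarith, by linarith⟩)
    refine (hleft.append_horiz hq.le (by linarith) hright).perm ?_
    simpa using ((List.Perm.swap corner.1 side.1 []).cons top.1).append_left (l.map Prod.fst)
  · have hrow : IsTiling (Rect.mk 0 (q + 1) q (q + 1)).carrier [top.2, corner.2] :=
      IsTiling.append_horiz (l := [_]) (m := [_]) hq.le (by linarith)
        (.singleton ⟨hq, by linarith⟩) (.singleton ⟨by linarith, by linarith⟩)
    have hside : IsTiling (Rect.mk (q + 1) (q + 2) 0 (q + 1)).carrier [side.2] :=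
      .singleton ⟨by linarith, by linarith⟩
    simpa using (hB.append_vert hq.le (by linarith) hrow).append_horiz (by linarith)
      (by linarith) hside
  · refine List.forall_mem_append.2 ⟨hl, ?_⟩
    simp only [List.mem_cons, List.not_mem_nil, or_false, forall_eq_or_imp, forall_eq]
    refine ⟨⟨?_, ?_⟩, ⟨?_, ?_⟩, ⟨?_, ?_⟩⟩ <;>
      simp only [top, corner, side, Rect.width, Rect.height] <;> ring

lemma strip {b : ℝ} (hb : 0 < b) (n : ℕ) : StrictPairList ((n + 1) * b) b (n + 1) := by
  induction n with
  | zero => simpa using square hb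
  | succ n ih =>
    have := ih.add_square (by positivity) hb
    push_cast
    rwa [add_one_mul ((n : ℝ) + 1)]

lemma of_nat (q : ℕ) (hq : 0 < q) : StrictPairList q (q + 1) (q + 1) := by
  obtain ⟨n, rfl⟩ := Nat.exists_eq_add_one.2 hq
  have := ((strip one_pos n).symm.add_square zero_le_one (by positivity)).symm
  push_cast
  convert this using 1 <;> ring

lemma four_mul_add_one {t : ℝ} (ht : 0 < t) (h : StrictPairList t (t + 1) k) :
    StrictPairList (4 * t + 1) (4 * t + 2) (k + 3) := by
  have h₁ : StrictPairList (2 * (2 * t + 1)) (2 * t) (k + 1) := by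
    convert (h.symm.add_square (by positivity) ht).scale two_pos using 1; ring
  convert (h₁.add_two_squares (by positivity) (by positivity)).symm using 1 <;> ring

lemma four_mul_add_two {t : ℝ} (ht : 0 < t) (h : StrictPairList t (t + 1) k) :
    StrictPairList (4 * t + 2) (4 * t + 3) (k + 3) := by
  have h₁ : StrictPairList (2 * (2 * t + 1)) (2 * t + 2) (k + 1) := by
    convert (h.add_square ht.le (by positivity)).scale two_pos using 1 <;> ring
  convert h₁.add_two_squares (by positivity) (by positivity) using 1 <;> ring

lemma add_nat {q : ℝ} (hq : 0 < q) (h : StrictPairList q (q + 1) k) (n : ℕ) :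
    StrictPairList (q + n) (q + n + 1) (k + 3 * n) := by
  induction n with
  | zero => simpa using h
  | succ n ih =>
    have := ih.succ (by positivity)
    push_cast
    convert this using 1 <;> ring

end StrictPairList

lemma four_mul_sqrt_add_le {t c r : ℝ} (ht : 4 ≤ t) (hc : 0 ≤ c)
    (h : 4 * c * t + c ^ 2 ≤ 48 * t + 16 * r) : 4 * √t + c ≤ 4 * √(4 * t + r) := by
  have hsqrt : 2 * √t ≤ t := by
    nlinarith [Real.sq_sqrt (by positivity : 0 ≤ t),
      Real.le_sqrt_of_sq_le (show 2 ^ 2 ≤ t by linarith)]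
  have : √t + c / 4 ≤ √(4 * t + r) := by
    apply Real.le_sqrt_of_sq_le
    nlinarith [Real.sq_sqrt (by positivity : 0 ≤ t)]
  linarith

lemma exists_strictPairList_le_of_le_sixteen {q : ℕ} (hq : 0 < q) (hq16 : q ≤ 16) :
    ∃ k : ℕ, StrictPairList q (q + 1) k ∧ (k : ℝ) ≤ 4 * √q + 1 := by
  refine ⟨q + 1, .of_nat q hq, ?_⟩
  have : √q ≤ 4 := Real.sqrt_le_iff.2 ⟨by norm_num, by norm_num; exact_mod_cast hq16⟩
  have := Real.sq_sqrt (Nat.cast_nonneg (α := ℝ) q)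
  push_cast
  nlinarith [Real.sqrt_nonneg (q : ℝ)]

lemma exists_strictPairList_four_mul_add_le {t r k : ℕ} (ht : 4 ≤ t) (hr₁ : 1 ≤ r) (hr₄ : r ≤ 4)
    (hk : StrictPairList t (t + 1) k) (hk_le : (k : ℝ) ≤ 4 * √t + 1) :
    ∃ k' : ℕ, StrictPairList ↑(4 * t + r) (↑(4 * t + r) + 1) k' ∧
      (k' : ℝ) ≤ 4 * √↑(4 * t + r) + 1 := by
  have htR : (4 : ℝ) ≤ t := by exact_mod_cast ht
  obtain rfl | ⟨n, rfl⟩ : r = 1 ∨ ∃ n, r = n + 2 := by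
    rcases hr₁.eq_or_lt with h | h
    exacts [Or.inl h.symm, Or.inr ⟨r - 2, by omega⟩]
  · refine ⟨k + 3, ?_, ?_⟩
    · convert hk.four_mul_add_one (by positivity) using 1 <;> push_cast <;> ring
    · have := four_mul_sqrt_add_le (c := 3) (r := 1) htR (by norm_num) (by nlinarith)
      push_cast at this ⊢
      linarith
  · have hnR : (n : ℝ) ≤ 2 := by exact_mod_cast (by omega : n ≤ 2)
    refine ⟨k + 3 + 3 * n, ?_, ?_⟩
    · have h₂ : StrictPairList (4 * t + 2) (4 * t + 2 + 1) (k + 3) := by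
        convert hk.four_mul_add_two (by positivity) using 1; ring
      convert h₂.add_nat (by positivity) n using 1 <;> push_cast <;> ring
    · have := four_mul_sqrt_add_le (c := 3 + 3 * n) (r := n + 2) htR (by positivity)
        (by nlinarith)
      push_cast at this ⊢
      linarith

theorem exists_strictPairList_le (q : ℕ) (hq : 0 < q) :
    ∃ k : ℕ, StrictPairList q (q + 1) k ∧ (k : ℝ) ≤ 4 * √q + 1 := by
  induction q using Nat.strong_induction_on with
  | _ q ih =>
  by_cases hq16 : q ≤ 16
  · exact exists_strictPairList_le_of_le_sixteen hq hq16
  obtain ⟨t, r, rfl, hr₁, hr₄, ht⟩ : ∃ t r : ℕ, q = 4 * t + r ∧ 1 ≤ r ∧ r ≤ 4 ∧ 4 ≤ t :=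
    ⟨(q - 1) / 4, (q - 1) % 4 + 1, by omega, by omega, by omega, by omega⟩
  obtain ⟨k, hk, hk_le⟩ := ih t (by omega) (by omega)
  exact exists_strictPairList_four_mul_add_le ht hr₁ hr₄ hk hk_le

/-- For every positive integer `p`, `SIRTP(p, p+1)` has a solution of size at most `4√p + 1`. -/
theorem sirtp_square_transfer_general (p : ℕ) (hp : 0 < p) :
    ∃ k : ℕ, StrictPair (p : ℝ) ((p : ℝ) + 1) k ∧ (k : ℝ) ≤ 4 * Real.sqrt (p : ℝ) + 1 := by
  obtain ⟨k, hk, hk_le⟩ := exists_strictPairList_le p hp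
  exact ⟨k, hk.strictPairGen, hk_le⟩
end

section
/- (Euclidean reduction step.) Let p and q be positive integers with p < q and p not dividing q, and let Δ = q mod p (so 0 < Δ < p). If there exists a strictly isomorphic rectangle partition pair for (Δ, p − (⌊p/Δ⌋ − 1)·Δ) of size s, then there exists a strictly isomorphic rectangle partition pair for (p,q) of size ⌊q/p⌋ + ⌊p/Δ⌋ − 1 + s. -/
open scoped Classical

namespace Rect

/-- Translate a rectangle. -/
def translate (a b : ℝ) (r : Rect) : Rect := ⟨r.x1 + a, r.x2 + a, r.y1 + b, r.y2 + b⟩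

/-- Transpose (reflect across the diagonal) a rectangle. -/
def transpose (r : Rect) : Rect := ⟨r.y1, r.y2, r.x1, r.x2⟩

lemma mem_carrier' {r : Rect} {z : ℝ × ℝ} :
    z ∈ r.carrier ↔ (r.x1 ≤ z.1 ∧ z.1 ≤ r.x2) ∧ (r.y1 ≤ z.2 ∧ z.2 ≤ r.y2) := by
  simp only [Rect.carrier, Set.mem_prod, Set.mem_Icc]

lemma mem_inner' {r : Rect} {z : ℝ × ℝ} :
    z ∈ r.inner ↔ (r.x1 < z.1 ∧ z.1 < r.x2) ∧ (r.y1 < z.2 ∧ z.2 < r.y2) := by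
  simp only [Rect.inner, Set.mem_prod, Set.mem_Ioo]

@[simp] lemma translate_width (a b : ℝ) (r : Rect) : (r.translate a b).width = r.width := by
  simp only [translate, width]; ring

@[simp] lemma translate_height (a b : ℝ) (r : Rect) : (r.translate a b).height = r.height := by
  simp only [translate, height]; ring

@[simp] lemma transpose_width (r : Rect) : r.transpose.width = r.height := rfl

@[simp] lemma transpose_height (r : Rect) : r.transpose.height = r.width := rfl

end Rect

lemma rect_bounds {k : ℕ} {W H : ℝ} {P : Fin k → Rect} (h : IsRectPartition W H P)
    (t : Fin k) : 0 ≤ (P t).x1 ∧ (P t).x2 ≤ W ∧ 0 ≤ (P t).y1 ∧ (P t).y2 ≤ H := by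
  have hsub : (P t).carrier ⊆ Set.Icc (0:ℝ) W ×ˢ Set.Icc (0:ℝ) H := by
    rw [← h.2.2]; exact Set.subset_iUnion (fun i => (P i).carrier) t
  have hnd := h.1 t
  have h1 := hsub (show ((P t).x1, (P t).y1) ∈ (P t).carrier by
    rw [Rect.mem_carrier']; exact ⟨⟨le_rfl, hnd.1.le⟩, ⟨le_rfl, hnd.2.le⟩⟩)
  have h2 := hsub (show ((P t).x2, (P t).y2) ∈ (P t).carrier by
    rw [Rect.mem_carrier']; exact ⟨⟨hnd.1.le, le_rfl⟩, ⟨hnd.2.le, le_rfl⟩⟩)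
  simp only [Set.mem_prod, Set.mem_Icc] at h1 h2
  exact ⟨h1.1.1, h2.1.2, h1.2.1, h2.2.2⟩

lemma transpose_partition {k : ℕ} {W H : ℝ} {P : Fin k → Rect}
    (h : IsRectPartition W H P) :
    IsRectPartition H W (fun i => (P i).transpose) := by
  refine ⟨fun i => ⟨(h.1 i).2, (h.1 i).1⟩, fun i j hij => ?_, ?_⟩
  · rw [Set.eq_empty_iff_forall_notMem]
    rintro ⟨x, y⟩ ⟨hx, hy⟩
    have := Set.eq_empty_iff_forall_notMem.mp (h.2.1 i j hij) (y, x)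
    simp only [Set.mem_inter_iff, Rect.mem_inner', Rect.transpose] at hx hy this
    exact this ⟨⟨hx.2, hx.1⟩, ⟨hy.2, hy.1⟩⟩
  · ext ⟨x, y⟩
    have := Set.ext_iff.mp h.2.2 (y, x)
    simp only [Set.mem_iUnion, Rect.mem_carrier', Set.mem_prod, Set.mem_Icc,
      Rect.transpose] at this ⊢
    constructor
    · rintro ⟨i, hi⟩
      have h2 := this.mp ⟨i, ⟨hi.2, hi.1⟩⟩
      exact ⟨h2.2, h2.1⟩
    · intro hxy
      obtain ⟨i, hi⟩ := this.mpr ⟨hxy.2, hxy.1⟩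
      exact ⟨i, ⟨hi.2, hi.1⟩⟩

lemma cover (c : ℝ) (hc : 0 < c) :
    ∀ m : ℕ, 0 < m → ∀ y : ℝ, 0 ≤ y → y ≤ m * c →
      ∃ i : ℕ, i < m ∧ (i : ℝ) * c ≤ y ∧ y ≤ ((i : ℝ) + 1) * c := by
  intro m
  induction m with
  | zero => intro h; exact absurd h (lt_irrefl 0)
  | succ k ih =>
    intro _ y hy0 hyc
    rcases Nat.eq_zero_or_pos k with rfl | hk
    · refine ⟨0, Nat.zero_lt_one, by simpa using hy0, ?_⟩
      push_cast at hyc ⊢; linarith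
    · rcases le_or_gt y (k * c) with h | h
      · obtain ⟨i, hi, h1, h2⟩ := ih hk y hy0 h
        exact ⟨i, Nat.lt_succ_of_lt hi, h1, h2⟩
      · exact ⟨k, Nat.lt_succ_self k, h.le, by push_cast at hyc ⊢; linarith⟩

/-- The basic assembly: `m` big `p × p` squares stacked vertically, then in the top
strip of height `Δ`, `n1` squares `Δ × Δ` followed by a translated copy of a
partition `Q` of `[0,r] × [0,Δ]`. -/
def assemble (p q Δ : ℝ) (m n1 s : ℕ) (Q : Fin s → Rect) (i : Fin (m + n1 + s)) : Rect :=
  if i.val < m then ⟨0, p, i.val * p, (i.val + 1) * p⟩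
  else if h2 : i.val < m + n1 then
    ⟨((i.val : ℝ) - m) * Δ, ((i.val : ℝ) - m + 1) * Δ, m * p, q⟩
  else (Q ⟨i.val - (m + n1), by have := i.isLt; omega⟩).translate (n1 * Δ) (m * p)

lemma assemble_lt {p q Δ : ℝ} {m n1 s : ℕ} {Q : Fin s → Rect} {i : Fin (m + n1 + s)}
    (h : i.val < m) :
    assemble p q Δ m n1 s Q i = ⟨0, p, i.val * p, (i.val + 1) * p⟩ := by
  simp [assemble, h]

lemma assemble_mid {p q Δ : ℝ} {m n1 s : ℕ} {Q : Fin s → Rect} {i : Fin (m + n1 + s)}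
    (h1 : ¬ i.val < m) (h2 : i.val < m + n1) :
    assemble p q Δ m n1 s Q i
      = ⟨((i.val : ℝ) - m) * Δ, ((i.val : ℝ) - m + 1) * Δ, m * p, q⟩ := by
  simp [assemble, h1, h2]

lemma assemble_hi {p q Δ : ℝ} {m n1 s : ℕ} {Q : Fin s → Rect} {i : Fin (m + n1 + s)}
    (h2 : ¬ i.val < m + n1) :
    assemble p q Δ m n1 s Q i
      = (Q ⟨i.val - (m + n1), by have := i.isLt; omega⟩).translate (n1 * Δ) (m * p) := by
  have h1 : ¬ i.val < m := by omega
  simp [assemble, h1, h2]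

lemma assemble_partition (p q Δ r : ℝ) (m n1 s : ℕ)
    (hp : 0 < p) (hΔ : 0 < Δ) (hm : 0 < m)
    (hq : q = m * p + Δ) (hpr : p = n1 * Δ + r) (hr : 0 ≤ r)
    (Q : Fin s → Rect) (hQ : IsRectPartition r Δ Q) :
    IsRectPartition p q (assemble p q Δ m n1 s Q) := by
  have hmp0 : 0 ≤ (m : ℝ) * p := by positivity
  refine ⟨?_, ?_, ?_⟩
  · -- nondegeneracy
    intro i
    rcases lt_or_ge i.val m with h1 | h1
    · rw [assemble_lt h1]
      refine ⟨hp, ?_⟩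
      have h3 : (i.val : ℝ) * p + p = ((i.val : ℝ) + 1) * p := by ring
      show (i.val : ℝ) * p < ((i.val : ℝ) + 1) * p
      linarith
    · rcases lt_or_ge i.val (m + n1) with h2 | h2
      · rw [assemble_mid (by omega) h2]
        constructor
        · show ((i.val : ℝ) - m) * Δ < ((i.val : ℝ) - m + 1) * Δ
          nlinarith
        · show (m : ℝ) * p < q
          linarith
      · rw [assemble_hi (by omega)]
        have := hQ.1 ⟨i.val - (m + n1), by have := i.isLt; omega⟩
        exact ⟨by simpa [Rect.translate] using this.1, by simpa [Rect.translate] using this.2⟩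
  · -- disjoint interiors
    have key : ∀ i j : Fin (m + n1 + s), ∀ x y : ℝ,
        (x, y) ∈ (assemble p q Δ m n1 s Q i).inner →
        (x, y) ∈ (assemble p q Δ m n1 s Q j).inner → i.val ≤ j.val → i = j := by
      intro i j x y hi hj hij
      rcases lt_or_ge i.val m with h1 | h1
      · rw [assemble_lt h1] at hi
        simp only [Rect.mem_inner'] at hi
        rcases lt_or_ge j.val m with g1 | g1
        · rw [assemble_lt g1] at hj
          simp only [Rect.mem_inner'] at hj
          have : i.val = j.val := by
            by_contra hne
            have hlt : i.val < j.val := by omega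
            have : (i.val : ℝ) + 1 ≤ (j.val : ℝ) := by exact_mod_cast hlt
            have h3 : ((i.val : ℝ) + 1) * p ≤ (j.val : ℝ) * p :=
              mul_le_mul_of_nonneg_right this hp.le
            linarith [hi.2.2, hj.2.1]
          exact Fin.ext this
        · exfalso
          have hbig : (m : ℝ) * p < y := by
            rcases lt_or_ge j.val (m + n1) with g2 | g2
            · rw [assemble_mid (by omega) g2] at hj
              simp only [Rect.mem_inner'] at hj
              exact hj.2.1
            · rw [assemble_hi (by omega)] at hj
              simp only [Rect.mem_inner', Rect.translate] at hj
              have hb := rect_bounds hQ ⟨j.val - (m + n1), by have := j.isLt; omega⟩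
              linarith [hj.2.1, hb.2.2.1]
          have : (i.val : ℝ) + 1 ≤ (m : ℝ) := by exact_mod_cast h1
          have h3 : ((i.val : ℝ) + 1) * p ≤ (m : ℝ) * p :=
            mul_le_mul_of_nonneg_right this hp.le
          linarith [hi.2.2]
      · have g1 : ¬ j.val < m := by omega
        rcases lt_or_ge i.val (m + n1) with h2 | h2
        · rw [assemble_mid (by omega) h2] at hi
          simp only [Rect.mem_inner'] at hi
          rcases lt_or_ge j.val (m + n1) with g2 | g2
          · rw [assemble_mid g1 g2] at hj
            simp only [Rect.mem_inner'] at hj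
            have : i.val = j.val := by
              by_contra hne
              have hlt : i.val < j.val := by omega
              have hc : (i.val : ℝ) + 1 ≤ (j.val : ℝ) := by exact_mod_cast hlt
              have h3 : ((i.val : ℝ) - m + 1) * Δ ≤ ((j.val : ℝ) - m) * Δ :=
                mul_le_mul_of_nonneg_right (by linarith) hΔ.le
              linarith [hi.1.2, hj.1.1]
            exact Fin.ext this
          · exfalso
            rw [assemble_hi (by omega)] at hj
            simp only [Rect.mem_inner', Rect.translate] at hj
            have hb := rect_bounds hQ ⟨j.val - (m + n1), by have := j.isLt; omega⟩
            have hc : (i.val : ℝ) + 1 ≤ (m : ℝ) + (n1 : ℝ) := by exact_mod_cast h2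
            have h3 : ((i.val : ℝ) - m + 1) * Δ ≤ (n1 : ℝ) * Δ :=
              mul_le_mul_of_nonneg_right (by linarith) hΔ.le
            linarith [hi.1.2, hj.1.1, hb.1]
        · have g2 : ¬ j.val < m + n1 := by omega
          rw [assemble_hi (by omega)] at hi
          rw [assemble_hi g2] at hj
          simp only [Rect.mem_inner', Rect.translate] at hi hj
          set ti : Fin s := ⟨i.val - (m + n1), by have := i.isLt; omega⟩
          set tj : Fin s := ⟨j.val - (m + n1), by have := j.isLt; omega⟩
          have hti : (x - n1 * Δ, y - m * p) ∈ (Q ti).inner := by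
            simp only [Rect.mem_inner']
            constructor <;> constructor <;> linarith [hi.1.1, hi.1.2, hi.2.1, hi.2.2]
          have htj : (x - n1 * Δ, y - m * p) ∈ (Q tj).inner := by
            simp only [Rect.mem_inner']
            constructor <;> constructor <;> linarith [hj.1.1, hj.1.2, hj.2.1, hj.2.2]
          have : ti = tj := by
            by_contra hne
            have := Set.eq_empty_iff_forall_notMem.mp (hQ.2.1 ti tj hne) (x - n1 * Δ, y - m * p)
            exact this ⟨hti, htj⟩
          have : ti.val = tj.val := congrArg Fin.val this
          apply Fin.ext
          simp only [ti, tj] at this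
          omega
    intro i j hij
    rw [Set.eq_empty_iff_forall_notMem]
    rintro ⟨x, y⟩ ⟨hx, hy⟩
    rcases le_total i.val j.val with h | h
    · exact hij (key i j x y hx hy h)
    · exact hij (key j i x y hy hx h).symm
  · -- union
    ext ⟨x, y⟩
    simp only [Set.mem_iUnion, Set.mem_prod, Set.mem_Icc]
    constructor
    · rintro ⟨i, hi⟩
      rcases lt_or_ge i.val m with h1 | h1
      · rw [assemble_lt h1] at hi
        simp only [Rect.mem_carrier'] at hi
        have : (i.val : ℝ) + 1 ≤ (m : ℝ) := by exact_mod_cast h1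
        have h3 : ((i.val : ℝ) + 1) * p ≤ (m : ℝ) * p :=
          mul_le_mul_of_nonneg_right this hp.le
        have h4 : (0 : ℝ) ≤ (i.val : ℝ) * p := by positivity
        refine ⟨⟨hi.1.1, hi.1.2⟩, ⟨by linarith [hi.2.1], by linarith [hi.2.2]⟩⟩
      · rcases lt_or_ge i.val (m + n1) with h2 | h2
        · rw [assemble_mid (by omega) h2] at hi
          simp only [Rect.mem_carrier'] at hi
          have hc1 : (m : ℝ) ≤ (i.val : ℝ) := by exact_mod_cast h1
          have hc2 : (i.val : ℝ) + 1 ≤ (m : ℝ) + (n1 : ℝ) := by exact_mod_cast h2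
          have h3 : (0 : ℝ) ≤ ((i.val : ℝ) - m) * Δ :=
            mul_nonneg (by linarith) hΔ.le
          have h4 : ((i.val : ℝ) - m + 1) * Δ ≤ (n1 : ℝ) * Δ :=
            mul_le_mul_of_nonneg_right (by linarith) hΔ.le
          have h5 : (n1 : ℝ) * Δ ≤ p := by linarith
          exact ⟨⟨by linarith [hi.1.1], by linarith [hi.1.2]⟩,
            ⟨by linarith [hi.2.1], by linarith [hi.2.2, hq]⟩⟩
        · rw [assemble_hi (by omega)] at hi
          simp only [Rect.mem_carrier', Rect.translate] at hi
          have hb := rect_bounds hQ ⟨i.val - (m + n1), by have := i.isLt; omega⟩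
          have hn1 : (0 : ℝ) ≤ (n1 : ℝ) * Δ := by positivity
          exact ⟨⟨by linarith [hi.1.1, hb.1], by linarith [hi.1.2, hb.2.1]⟩,
            ⟨by linarith [hi.2.1, hb.2.2.1], by linarith [hi.2.2, hb.2.2.2]⟩⟩
    · rintro ⟨⟨hx0, hxp⟩, ⟨hy0, hyq⟩⟩
      rcases le_or_gt y ((m : ℝ) * p) with hy | hy
      · obtain ⟨i, him, hil, hiu⟩ := cover p hp m hm y hy0 hy
        refine ⟨⟨i, by omega⟩, ?_⟩
        rw [assemble_lt (by simpa using him)]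
        simp only [Rect.mem_carrier']
        exact ⟨⟨hx0, hxp⟩, ⟨hil, hiu⟩⟩
      · rcases le_or_gt ((n1 : ℝ) * Δ) x with hx | hx
        · -- in the Q region
          have hmem : (x - n1 * Δ, y - m * p) ∈ Set.Icc (0:ℝ) r ×ˢ Set.Icc (0:ℝ) Δ := by
            simp only [Set.mem_prod, Set.mem_Icc]
            exact ⟨⟨by linarith, by linarith⟩, ⟨by linarith, by linarith⟩⟩
          rw [← hQ.2.2] at hmem
          simp only [Set.mem_iUnion] at hmem
          obtain ⟨t, ht⟩ := hmem
          refine ⟨⟨m + n1 + t.val, by have := t.isLt; omega⟩, ?_⟩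
          rw [assemble_hi (not_lt.mpr (Nat.le_add_right (m + n1) t.val))]
          have heq : (⟨m + n1 + t.val - (m + n1), by have := t.isLt; omega⟩ : Fin s) = t := by
            apply Fin.ext; simp
          rw [heq]
          simp only [Rect.mem_carrier', Rect.translate] at ht ⊢
          constructor <;> constructor <;> linarith [ht.1.1, ht.1.2, ht.2.1, ht.2.2]
        · -- in one of the Δ-squares
          have hn1pos : 0 < n1 := by
            by_contra h
            push_neg at h
            interval_cases n1
            simp at hx
            linarith
          obtain ⟨i, him, hil, hiu⟩ := cover Δ hΔ n1 hn1pos x hx0 hx.le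
          refine ⟨⟨m + i, by omega⟩, ?_⟩
          rw [assemble_mid (by simp) (by simp; omega)]
          simp only [Rect.mem_carrier']
          have : ((m + i : ℕ) : ℝ) = (m : ℝ) + i := by push_cast; ring
          refine ⟨⟨?_, ?_⟩, ⟨hy.le, hyq⟩⟩
          · rw [this]; calc ((m:ℝ) + i - m) * Δ = (i:ℝ) * Δ := by ring
              _ ≤ x := hil
          · rw [this]
            calc x ≤ ((i:ℝ) + 1) * Δ := hiu
              _ = ((m:ℝ) + i - m + 1) * Δ := by ring

/-- The underlying function of `shiftPerm`. -/
def shiftFun (a s : ℕ) (τ : Equiv.Perm (Fin s)) (i : Fin (a + s)) : Fin (a + s) :=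
  if h : i.val < a then i else Fin.natAdd a (τ ⟨i.val - a, by have := i.isLt; omega⟩)

lemma shiftFun_inv (a s : ℕ) (τ : Equiv.Perm (Fin s)) (i : Fin (a + s)) :
    shiftFun a s τ.symm (shiftFun a s τ i) = i := by
  by_cases h : i.val < a
  · simp only [shiftFun, dif_pos h]
  · simp only [shiftFun, dif_neg h]
    have hna : ¬ (Fin.natAdd a (τ ⟨i.val - a, by have := i.isLt; omega⟩)).val < a := by
      simp [Fin.natAdd]
    rw [dif_neg hna]
    have heq : (⟨(Fin.natAdd a (τ ⟨i.val - a, by have := i.isLt; omega⟩)).val - a,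
        by have := (τ ⟨i.val - a, by have := i.isLt; omega⟩).isLt; simp [Fin.natAdd]⟩ : Fin s)
        = τ ⟨i.val - a, by have := i.isLt; omega⟩ := by
      apply Fin.ext; simp [Fin.natAdd]
    rw [heq, Equiv.symm_apply_apply]
    apply Fin.ext
    simp [Fin.natAdd]
    omega

/-- Shift a permutation of `Fin s` to a permutation of `Fin (a + s)` fixing the first
`a` elements. -/
def shiftPerm (a s : ℕ) (τ : Equiv.Perm (Fin s)) : Equiv.Perm (Fin (a + s)) where
  toFun := shiftFun a s τ
  invFun := shiftFun a s τ.symm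
  left_inv := shiftFun_inv a s τ
  right_inv i := by
    have := shiftFun_inv a s τ.symm i
    rwa [Equiv.symm_symm] at this


lemma shiftPerm_lt {a s : ℕ} (τ : Equiv.Perm (Fin s)) {i : Fin (a + s)}
    (h : i.val < a) : shiftPerm a s τ i = i := by
  simp only [shiftPerm, Equiv.coe_fn_mk, shiftFun, dif_pos h]

lemma shiftPerm_ge {a s : ℕ} (τ : Equiv.Perm (Fin s)) {i : Fin (a + s)}
    (h : ¬ i.val < a) :
    shiftPerm a s τ i = Fin.natAdd a (τ ⟨i.val - a, by have := i.isLt; omega⟩) := by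
  simp only [shiftPerm, Equiv.coe_fn_mk, shiftFun, dif_neg h]

/-- Euclidean reduction step: a solution of size `s` to the subproblem
`(Δ, p − (⌊p/Δ⌋ − 1)·Δ)` yields a solution of size `⌊q/p⌋ + ⌊p/Δ⌋ − 1 + s` to
`SIRTP(p,q)`. -/
theorem sirtp_euclidean_step (p q Δ s : ℕ) (hp : 0 < p) (hpq : p < q)
    (hnd : ¬ p ∣ q) (hΔ : Δ = q % p)
    (hsub : StrictPair (Δ : ℝ) ((p - (p / Δ - 1) * Δ : ℕ) : ℝ) s) :
    StrictPair (p : ℝ) (q : ℝ) (q / p + p / Δ - 1 + s) := by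
  obtain ⟨Q1, Q2, σ, hQ1, hQ2, hmatch⟩ := hsub
  -- numeric facts
  have hΔ0 : q % p ≠ 0 := fun h => hnd (Nat.dvd_of_mod_eq_zero h)
  have hΔpos : 0 < Δ := by omega
  have hΔltp : Δ < p := hΔ ▸ Nat.mod_lt q hp
  set m := q / p with hm
  set n := p / Δ with hn
  have hmpos : 0 < m := Nat.div_pos hpq.le hp
  have hnpos : 0 < n := Nat.div_pos hΔltp.le hΔpos
  have hqe : q = m * p + Δ := by
    rw [hΔ, hm]
    exact (Nat.div_add_mod' q p).symm
  set n1 := n - 1 with hn1def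
  have hn1le : n1 * Δ ≤ p := by
    have h1 : n * Δ ≤ p := by rw [hn]; exact Nat.div_mul_le_self p Δ
    have h2 : n1 * Δ ≤ n * Δ := Nat.mul_le_mul_right Δ (by omega)
    exact le_trans h2 h1
  set r := p - n1 * Δ with hrdef
  have hre : p = n1 * Δ + r := (Nat.add_sub_cancel' hn1le).symm
  -- the subproblem data
  have hQ1' : IsRectPartition (Δ : ℝ) (r : ℝ) Q1 := hQ1
  have hQ2' : IsRectPartition (r : ℝ) (Δ : ℝ) Q2 := hQ2
  -- real versions
  have hpR : (0 : ℝ) < p := by exact_mod_cast hp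
  have hΔR : (0 : ℝ) < Δ := by exact_mod_cast hΔpos
  have hqR : (q : ℝ) = (m : ℝ) * p + Δ := by exact_mod_cast hqe
  have hrR : (p : ℝ) = (n1 : ℝ) * Δ + r := by exact_mod_cast hre
  have hr0 : (0 : ℝ) ≤ (r : ℝ) := Nat.cast_nonneg r
  rw [show m + n - 1 + s = m + n1 + s by omega]
  -- the partitions
  have hP1 : IsRectPartition (p : ℝ) (q : ℝ)
      (assemble (p : ℝ) (q : ℝ) (Δ : ℝ) m n1 s Q2) :=
    assemble_partition _ _ _ _ m n1 s hpR hΔR hmpos hqR hrR hr0 Q2 hQ2'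
  have hQ1T : IsRectPartition (r : ℝ) (Δ : ℝ) (fun t => (Q1 t).transpose) :=
    transpose_partition hQ1'
  have hP2' : IsRectPartition (p : ℝ) (q : ℝ)
      (assemble (p : ℝ) (q : ℝ) (Δ : ℝ) m n1 s (fun t => (Q1 t).transpose)) :=
    assemble_partition _ _ _ _ m n1 s hpR hΔR hmpos hqR hrR hr0 _ hQ1T
  have hP2 : IsRectPartition (q : ℝ) (p : ℝ)
      (fun i => (assemble (p : ℝ) (q : ℝ) (Δ : ℝ) m n1 s (fun t => (Q1 t).transpose) i).transpose) :=
    transpose_partition hP2'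
  refine ⟨assemble (p : ℝ) (q : ℝ) (Δ : ℝ) m n1 s Q2,
    fun i => (assemble (p : ℝ) (q : ℝ) (Δ : ℝ) m n1 s (fun t => (Q1 t).transpose) i).transpose,
    shiftPerm (m + n1) s σ.symm, hP1, hP2, ?_⟩
  intro i
  rcases lt_or_ge i.val (m + n1) with h2 | h2
  · rw [shiftPerm_lt σ.symm h2]
    rcases lt_or_ge i.val m with h1 | h1
    · simp only [assemble_lt h1, Rect.width, Rect.height, Rect.transpose]
      constructor <;> ring
    · simp only [assemble_mid (show ¬ i.val < m by omega) h2, Rect.width, Rect.height,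
        Rect.transpose]
      refine ⟨?_, ?_⟩ <;> linarith [hqR]
  · rw [shiftPerm_ge σ.symm (not_lt.mpr h2)]
    simp only [assemble_hi (not_lt.mpr h2)]
    set t : Fin s := ⟨i.val - (m + n1), by have := i.isLt; omega⟩ with ht
    set u : Fin s := σ.symm t with hu
    have hval : (Fin.natAdd (m + n1) u).val = m + n1 + u.val := rfl
    simp only [assemble_hi (i := Fin.natAdd (m + n1) u) (show ¬ (Fin.natAdd (m + n1) u).val < m + n1 by simp [Fin.natAdd])]
    have heq : (⟨(Fin.natAdd (m + n1) u).val - (m + n1), by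
        have := u.isLt; simp [Fin.natAdd]⟩ : Fin s) = u := by
      apply Fin.ext; simp [Fin.natAdd]
    rw [heq]
    have hmu := hmatch u
    have hσu : σ u = t := by rw [hu, Equiv.apply_symm_apply]
    rw [hσu] at hmu
    simp only [Rect.translate_width, Rect.translate_height, Rect.transpose_width,
      Rect.transpose_height]
    exact ⟨hmu.1.symm, hmu.2.symm⟩
end

section
/- (Stretch technique.) Let a, b, c, d, λ be positive real numbers with ab = cd. If there exists a strictly isomorphic rectangle partition pair between a×b and c×d of size k, then there exists a strictly isomorphic rectangle partition pair between (λa)×b and (λc)×d of size k. -/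
open scoped Classical

/-- Stretch a rectangle horizontally by factor `l`. -/
def Rect.stretch (l : ℝ) (r : Rect) : Rect := ⟨l * r.x1, l * r.x2, r.y1, r.y2⟩

lemma image_mul_Ioo {l : ℝ} (hl : 0 < l) (a b : ℝ) :
    (fun x => l * x) '' Set.Ioo a b = Set.Ioo (l * a) (l * b) := by
  ext x
  constructor
  · rintro ⟨y, ⟨h1, h2⟩, rfl⟩
    exact ⟨mul_lt_mul_of_pos_left h1 hl, mul_lt_mul_of_pos_left h2 hl⟩
  · rintro ⟨h1, h2⟩
    exact ⟨x / l, ⟨by rw [lt_div_iff₀ hl]; linarith [mul_comm a l],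
      by rw [div_lt_iff₀ hl]; linarith [mul_comm b l]⟩, by field_simp⟩

lemma image_mul_Icc {l : ℝ} (hl : 0 < l) (a b : ℝ) :
    (fun x => l * x) '' Set.Icc a b = Set.Icc (l * a) (l * b) := by
  ext x
  constructor
  · rintro ⟨y, ⟨h1, h2⟩, rfl⟩
    exact ⟨mul_le_mul_of_nonneg_left h1 hl.le, mul_le_mul_of_nonneg_left h2 hl.le⟩
  · rintro ⟨h1, h2⟩
    exact ⟨x / l, ⟨by rw [le_div_iff₀ hl]; linarith [mul_comm a l],
      by rw [div_le_iff₀ hl]; linarith [mul_comm b l]⟩, by field_simp⟩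

lemma stretch_partition {k : ℕ} {W H l : ℝ} (hl : 0 < l) {P : Fin k → Rect}
    (hP : IsRectPartition W H P) :
    IsRectPartition (l * W) H (fun i => (P i).stretch l) := by
  obtain ⟨hnd, hdisj, hunion⟩ := hP
  set f : ℝ × ℝ → ℝ × ℝ := fun p => (l * p.1, p.2) with hf
  have hinj : Function.Injective f := by
    intro p q hpq
    simp only [hf, Prod.mk.injEq] at hpq
    have : p.1 = q.1 := by
      have := hpq.1; nlinarith [hpq.1]
    exact Prod.ext this hpq.2
  have hinner : ∀ r : Rect, (r.stretch l).inner = f '' r.inner := by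
    intro r
    simp only [Rect.inner, Rect.stretch, hf]
    rw [← image_mul_Ioo hl]
    ext ⟨x, y⟩
    constructor
    · rintro ⟨⟨u, hu, rfl⟩, hy⟩
      exact ⟨(u, y), ⟨hu, hy⟩, rfl⟩
    · rintro ⟨⟨u, v⟩, ⟨hu, hv⟩, heq⟩
      cases heq
      exact ⟨⟨u, hu, rfl⟩, hv⟩
  have hcarrier : ∀ r : Rect, (r.stretch l).carrier = f '' r.carrier := by
    intro r
    simp only [Rect.carrier, Rect.stretch, hf]
    rw [← image_mul_Icc hl]
    ext ⟨x, y⟩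
    constructor
    · rintro ⟨⟨u, hu, rfl⟩, hy⟩
      exact ⟨(u, y), ⟨hu, hy⟩, rfl⟩
    · rintro ⟨⟨u, v⟩, ⟨hu, hv⟩, heq⟩
      cases heq
      exact ⟨⟨u, hu, rfl⟩, hv⟩
  refine ⟨?_, ?_, ?_⟩
  · intro i
    obtain ⟨h1, h2⟩ := hnd i
    exact ⟨by simpa [Rect.stretch] using mul_lt_mul_of_pos_left h1 hl, h2⟩
  · intro i j hij
    rw [hinner, hinner, ← Set.image_inter hinj, hdisj i j hij, Set.image_empty]
  · have : (⋃ i, ((P i).stretch l).carrier) = f '' (⋃ i, (P i).carrier) := by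
      rw [Set.image_iUnion]
      exact Set.iUnion_congr fun i => hcarrier (P i)
    rw [this, hunion]
    ext ⟨x, y⟩
    constructor
    · rintro ⟨⟨u, v⟩, ⟨hu, hv⟩, heq⟩
      cases heq
      exact ⟨⟨mul_nonneg hl.le hu.1, by simpa using mul_le_mul_of_nonneg_left hu.2 hl.le⟩, hv⟩
    · rintro ⟨⟨hx1, hx2⟩, hy⟩
      refine ⟨(x / l, y), ⟨⟨by positivity, by rw [div_le_iff₀ hl]; linarith [mul_comm W l]⟩, hy⟩, ?_⟩
      simp only [hf]
      field_simp

/-- Stretch technique: a strictly isomorphic pair between `a × b` and `c × d` yields one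
between `(λa) × b` and `(λc) × d` of the same size. -/
theorem srtp_stretch (a b c d l : ℝ) (ha : 0 < a) (hb : 0 < b) (hc : 0 < c)
    (hd : 0 < d) (hl : 0 < l) (harea : a * b = c * d) (k : ℕ)
    (h : StrictPairGen a b c d k) : StrictPairGen (l * a) b (l * c) d k := by
  obtain ⟨P1, P2, σ, h1, h2, hσ⟩ := h
  refine ⟨fun i => (P1 i).stretch l, fun i => (P2 i).stretch l, σ,
    stretch_partition hl h1, stretch_partition hl h2, fun i => ?_⟩
  obtain ⟨hw, hh⟩ := hσ i
  constructor
  · simp only [Rect.width, Rect.stretch] at *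
    nlinarith
  · simpa [Rect.height, Rect.stretch] using hh
end

section
/- Let a, b, c, d be positive real numbers with a ≥ c ≥ d ≥ b and ab = cd. Then every isomorphic rectangle partition pair between a×b and c×d (rotation allowed) has size at least a/c. (In particular, ⌈a/c⌉ is a lower bound on the minimum size of a solution to RTP(a,b,c,d).) -/
open scoped Classical

/-- Trivial lower bound for `RTP(a,b,c,d)` (rotation allowed): every isomorphic pair
between `a × b` and `c × d` has size at least `a/c`. -/
theorem rtp_trivial_lower_bound (a b c d : ℝ) (hb : 0 < b) (hba : b ≤ d)
    (hdc : d ≤ c) (hca : c ≤ a) (harea : a * b = c * d) (k : ℕ)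
    (h : IsoPairRot a b c d k) : a / c ≤ (k : ℝ) := by
  obtain ⟨P1, P2, σ, hP1, hP2, hmatch⟩ := h
  have hc : 0 < c := lt_of_lt_of_le hb (hba.trans hdc)
  -- every module of P2 has width and height at most c
  have hW2 : ∀ j, (P2 j).width ≤ c ∧ (P2 j).height ≤ c := by
    intro j
    have hnd := hP2.1 j
    have hsub : (P2 j).carrier ⊆ Set.Icc (0:ℝ) c ×ˢ Set.Icc (0:ℝ) d := by
      rw [← hP2.2.2]; exact Set.subset_iUnion (fun i => (P2 i).carrier) j
    have h1 : ((P2 j).x1, (P2 j).y1) ∈ (P2 j).carrier :=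
      ⟨⟨le_refl _, hnd.1.le⟩, ⟨le_refl _, hnd.2.le⟩⟩
    have h2 : ((P2 j).x2, (P2 j).y2) ∈ (P2 j).carrier :=
      ⟨⟨hnd.1.le, le_refl _⟩, ⟨hnd.2.le, le_refl _⟩⟩
    have m1 := hsub h1
    have m2 := hsub h2
    simp only [Set.mem_prod, Set.mem_Icc] at m1 m2
    constructor
    · simp only [Rect.width]; linarith [m1.1.1, m2.1.2]
    · simp only [Rect.height]; linarith [m1.2.1, m2.2.2, hdc]
  have hw : ∀ i, (P1 i).x2 - (P1 i).x1 ≤ c := by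
    intro i
    have := hmatch i
    have h2 := hW2 (σ i)
    rcases this with ⟨hwi, _⟩ | ⟨hwi, _⟩
    · have : (P1 i).width ≤ c := hwi ▸ h2.1
      simpa [Rect.width] using this
    · have : (P1 i).width ≤ c := hwi ▸ h2.2
      simpa [Rect.width] using this
  -- the segment [0,a] × {0} is covered
  have cover : Set.Icc (0:ℝ) a ⊆ ⋃ i, Set.Icc (P1 i).x1 (P1 i).x2 := by
    intro t ht
    have hpt : ((t, (0:ℝ)) : ℝ × ℝ) ∈ Set.Icc (0:ℝ) a ×ˢ Set.Icc (0:ℝ) b :=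
      ⟨ht, ⟨le_refl _, hb.le⟩⟩
    rw [← hP1.2.2] at hpt
    obtain ⟨S, ⟨i, rfl⟩, hmem⟩ := hpt
    exact Set.mem_iUnion.2 ⟨i, hmem.1⟩
  have ha : 0 < a := lt_of_lt_of_le hc hca
  have key : ENNReal.ofReal a ≤ (k : ENNReal) * ENNReal.ofReal c := by
    calc ENNReal.ofReal a = MeasureTheory.volume (Set.Icc (0:ℝ) a) := by
          rw [Real.volume_Icc, sub_zero]
      _ ≤ MeasureTheory.volume (⋃ i, Set.Icc (P1 i).x1 (P1 i).x2) :=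
          MeasureTheory.measure_mono cover
      _ ≤ ∑ i : Fin k, MeasureTheory.volume (Set.Icc (P1 i).x1 (P1 i).x2) :=
          MeasureTheory.measure_iUnion_fintype_le _ _
      _ ≤ ∑ _i : Fin k, ENNReal.ofReal c := by
          refine Finset.sum_le_sum fun i _ => ?_
          rw [Real.volume_Icc]
          exact ENNReal.ofReal_le_ofReal (hw i)
      _ = (k : ENNReal) * ENNReal.ofReal c := by
          simp [Finset.sum_const, nsmul_eq_mul]
  have hkc : a ≤ (k : ℝ) * c := by
    have : ENNReal.ofReal a ≤ ENNReal.ofReal ((k : ℝ) * c) := by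
      rwa [ENNReal.ofReal_mul (by positivity), ENNReal.ofReal_natCast]
    have := (ENNReal.ofReal_le_ofReal_iff (by positivity)).1 this
    exact this
  rw [div_le_iff₀ hc]
  exact hkc
end
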